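/- arXiv:1811.09235 — 12 statements merged into one kernel-verified Lean document; each statement's English description precedes it below -/
import Mathlib

section
/- Let V be a finite-dimensional vector space over a field K and let B₁, B₂ be two nondegenerate bilinear forms on V with canonical operators κ₁, κ₂ (characterized by Bᵢ(x,y) = Bᵢ(y, κᵢ(x)) for all x,y). Then κ₁ = κ₂ if and only if there exists an invertible linear endomorphism ψ of V which is self-adjoint with respect to both forms, i.e. Bᵢ(ψ(x), y) = Bᵢ(x, ψ(y)) for i = 1, 2 and all x, y ∈ V, and which satisfies B₁(x, y) = B₂(x, ψ(y)) for all x, y ∈ V. -/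
/-- Two nondegenerate bilinear forms on a finite-dimensional vector space share the same
canonical operator if and only if they differ by an invertible operator `ψ` which is
self-adjoint for both forms: `B₁(x, y) = B₂(x, ψ(y))`. -/
theorem stmt_2 {K V : Type*} [Field K] [AddCommGroup V] [Module K V] [FiniteDimensional K V]
    (B₁ B₂ : V →ₗ[K] V →ₗ[K] K)
    (hB₁l : ∀ x, (∀ y, B₁ x y = 0) → x = 0) (hB₁r : ∀ y, (∀ x, B₁ x y = 0) → y = 0)
    (hB₂l : ∀ x, (∀ y, B₂ x y = 0) → x = 0) (hB₂r : ∀ y, (∀ x, B₂ x y = 0) → y = 0)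
    (κ₁ κ₂ : V →ₗ[K] V)
    (hκ₁ : ∀ x y, B₁ x y = B₁ y (κ₁ x))
    (hκ₂ : ∀ x y, B₂ x y = B₂ y (κ₂ x)) :
    κ₁ = κ₂ ↔
      ∃ ψ : V ≃ₗ[K] V,
        (∀ x y, B₁ (ψ x) y = B₁ x (ψ y)) ∧
        (∀ x y, B₂ (ψ x) y = B₂ x (ψ y)) ∧
        (∀ x y, B₁ x y = B₂ x (ψ y)) := by
  constructor
  · intro hk
    -- build ψ from the isomorphisms V ≃ Dual V induced by the right slots
    have hinj₁ : Function.Injective B₁.flip := by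
      rw [injective_iff_map_eq_zero]
      intro y hy
      exact hB₁r y fun x => congrFun (congrArg DFunLike.coe hy) x
    have hinj₂ : Function.Injective B₂.flip := by
      rw [injective_iff_map_eq_zero]
      intro y hy
      exact hB₂r y fun x => congrFun (congrArg DFunLike.coe hy) x
    have hdim : Module.finrank K V = Module.finrank K (Module.Dual K V) :=
      (Subspace.dual_finrank_eq).symm
    let e₁ : V ≃ₗ[K] Module.Dual K V := B₁.flip.linearEquivOfInjective hinj₁ hdim
    let e₂ : V ≃ₗ[K] Module.Dual K V := B₂.flip.linearEquivOfInjective hinj₂ hdim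
    refine ⟨e₁.trans e₂.symm, ?_⟩
    set ψ : V ≃ₗ[K] V := e₁.trans e₂.symm with hψ
    -- the defining relation
    have hrel : ∀ x y, B₁ x y = B₂ x (ψ y) := by
      intro x y
      have : e₂ (ψ y) = e₁ y := by simp [hψ]
      have h1 : B₂.flip (ψ y) = B₁.flip y := by
        simpa [e₁, e₂, LinearMap.linearEquivOfInjective_apply] using this
      exact (congrFun (congrArg DFunLike.coe h1) x).symm
    -- κ := κ₁ = κ₂ is injective hence surjective
    have hκinj : Function.Injective κ₁ := by
      rw [injective_iff_map_eq_zero]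
      intro z hz
      exact hB₁l z fun x => by
        have := hκ₁ z x
        rw [hz, map_zero] at this
        exact this
    have hκsurj : Function.Surjective κ₁ :=
      (LinearMap.injective_iff_surjective).mp hκinj
    -- the key identity: B₂ (ψ x) y = B₁ x y
    have hkey : ∀ x y, B₂ (ψ x) y = B₁ x y := by
      intro x y
      obtain ⟨z, rfl⟩ := hκsurj y
      calc B₂ (ψ x) (κ₁ z) = B₂ (ψ x) (κ₂ z) := by rw [hk]
        _ = B₂ z (ψ x) := (hκ₂ z (ψ x)).symm
        _ = B₁ z x := (hrel z x).symm
        _ = B₁ x (κ₁ z) := hκ₁ z x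
    refine ⟨?_, ?_, hrel⟩
    · intro x y
      rw [hrel (ψ x) y, hkey x (ψ y)]
    · intro x y
      rw [hkey x y, hrel x y]
  · rintro ⟨ψ, hsa₁, hsa₂, hrel⟩
    ext x
    have h : ∀ w, B₂ w (κ₁ x) = B₂ w (κ₂ x) := by
      intro w
      obtain ⟨z, rfl⟩ := ψ.surjective w
      calc B₂ (ψ z) (κ₁ x) = B₂ z (ψ (κ₁ x)) := hsa₂ z (κ₁ x)
        _ = B₁ z (κ₁ x) := (hrel z (κ₁ x)).symm
        _ = B₁ x z := (hκ₁ x z).symm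
        _ = B₂ x (ψ z) := hrel x z
        _ = B₂ (ψ z) (κ₂ x) := hκ₂ x (ψ z)
    have : κ₁ x - κ₂ x = 0 := hB₂r _ fun w => by
      rw [map_sub, h w, sub_self]
    simpa [sub_eq_zero] using this
end

section
/- Let K be a field, n ≥ 1, G an invertible n×n matrix over K, and φ an arbitrary n×n matrix over K. Define the right adjoint φ^∨ := G⁻¹·φᵀ·G, the left adjoint ^∨φ := (Gᵀ)⁻¹·φᵀ·Gᵀ, and the canonical operator κ := G⁻¹·Gᵀ. Then the following four conditions are pairwise equivalent: (1) ^∨φ = φ^∨; (2) φ = (φ^∨)^∨, i.e. φ = G⁻¹·(φ^∨)ᵀ·G; (3) φ = ^∨(^∨φ), i.e. φ = (Gᵀ)⁻¹·(^∨φ)ᵀ·Gᵀ; (4) φ·κ = κ·φ. -/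
open Matrix

/-- **Reflexive operators and the canonical algebra.** For an invertible Gram matrix `G`
and an arbitrary matrix `φ`, with left adjoint `^∨φ = (Gᵀ)⁻¹·φᵀ·Gᵀ`, right adjoint
`φ^∨ = G⁻¹·φᵀ·G` and canonical operator `κ = G⁻¹·Gᵀ`, the following are equivalent:
(1) `^∨φ = φ^∨`; (2) `φ = (φ^∨)^∨`; (3) `φ = ^∨(^∨φ)`; (4) `φ·κ = κ·φ`. -/
theorem stmt_4 {K : Type*} [Field K] {n : ℕ} (hn : 1 ≤ n)
    (G φ : Matrix (Fin n) (Fin n) K) (hG : IsUnit G) :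
    List.TFAE
      [ (Gᵀ)⁻¹ * φᵀ * Gᵀ = G⁻¹ * φᵀ * G,
        φ = G⁻¹ * (G⁻¹ * φᵀ * G)ᵀ * G,
        φ = (Gᵀ)⁻¹ * ((Gᵀ)⁻¹ * φᵀ * Gᵀ)ᵀ * Gᵀ,
        φ * (G⁻¹ * Gᵀ) = (G⁻¹ * Gᵀ) * φ ] := by
  have hdet : IsUnit G.det := (Matrix.isUnit_iff_isUnit_det G).mp hG
  have hdT : IsUnit Gᵀ.det := by rwa [Matrix.det_transpose]
  have e1 : G * G⁻¹ = 1 := Matrix.mul_nonsing_inv G hdet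
  have e2 : G⁻¹ * G = 1 := Matrix.nonsing_inv_mul G hdet
  have e3 : Gᵀ * (Gᵀ)⁻¹ = 1 := Matrix.mul_nonsing_inv _ hdT
  have e4 : (Gᵀ)⁻¹ * Gᵀ = 1 := Matrix.nonsing_inv_mul _ hdT
  have h1 : ∀ M : Matrix (Fin n) (Fin n) K, G * (G⁻¹ * M) = M := fun M => by
    rw [← Matrix.mul_assoc, e1, Matrix.one_mul]
  have h2 : ∀ M : Matrix (Fin n) (Fin n) K, G⁻¹ * (G * M) = M := fun M => by
    rw [← Matrix.mul_assoc, e2, Matrix.one_mul]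
  have h3 : ∀ M : Matrix (Fin n) (Fin n) K, Gᵀ * ((Gᵀ)⁻¹ * M) = M := fun M => by
    rw [← Matrix.mul_assoc, e3, Matrix.one_mul]
  have h4 : ∀ M : Matrix (Fin n) (Fin n) K, (Gᵀ)⁻¹ * (Gᵀ * M) = M := fun M => by
    rw [← Matrix.mul_assoc, e4, Matrix.one_mul]
  tfae_have 1 → 4 := by
    intro h
    have ht := congrArg Matrix.transpose h
    simp only [Matrix.transpose_mul, Matrix.transpose_nonsing_inv,
      Matrix.transpose_transpose] at ht
    have := congrArg (fun X => G⁻¹ * X * Gᵀ) ht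
    simpa [Matrix.mul_assoc, h1, h2, h3, h4, e1, e2, e3, e4] using this
  tfae_have 4 → 1 := by
    intro h
    have ht := congrArg Matrix.transpose h
    simp only [Matrix.transpose_mul, Matrix.transpose_nonsing_inv,
      Matrix.transpose_transpose] at ht
    have := congrArg (fun X => G⁻¹ * X * Gᵀ) ht.symm
    simpa [Matrix.mul_assoc, h1, h2, h3, h4, e1, e2, e3, e4] using this.symm
  tfae_have 4 → 2 := by
    intro h
    have := congrArg (fun X => X * ((Gᵀ)⁻¹ * G)) h.symm
    simp only [Matrix.transpose_mul, Matrix.transpose_nonsing_inv,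
      Matrix.transpose_transpose]
    simp only [Matrix.mul_assoc, h1, h2, h3, h4, e1, e2, e3, e4,
      Matrix.mul_one, Matrix.one_mul] at this ⊢
    exact this.symm
  tfae_have 2 → 4 := by
    intro h
    have := congrArg (fun X => X * (G⁻¹ * Gᵀ)) h
    simp only [Matrix.transpose_mul, Matrix.transpose_nonsing_inv,
      Matrix.transpose_transpose] at this
    simp only [Matrix.mul_assoc, h1, h2, h3, h4, e1, e2, e3, e4,
      Matrix.mul_one, Matrix.one_mul] at this
    simpa [Matrix.mul_assoc] using this
  tfae_have 4 → 3 := by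
    intro h
    have := congrArg (fun X => (Gᵀ)⁻¹ * (G * X)) h.symm
    simp only [Matrix.transpose_mul, Matrix.transpose_nonsing_inv,
      Matrix.transpose_transpose]
    simp only [Matrix.mul_assoc, h1, h2, h3, h4, e1, e2, e3, e4,
      Matrix.mul_one, Matrix.one_mul] at this ⊢
    exact this
  tfae_have 3 → 4 := by
    intro h
    have := congrArg (fun X => (G⁻¹ * Gᵀ) * X) h
    simp only [Matrix.transpose_mul, Matrix.transpose_nonsing_inv,
      Matrix.transpose_transpose] at this
    simp only [Matrix.mul_assoc, h1, h2, h3, h4, e1, e2, e3, e4,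
      Matrix.mul_one, Matrix.one_mul] at this
    simpa [Matrix.mul_assoc] using this.symm
  tfae_finish
end

section
/- Let K be a field of characteristic zero and n ≥ 1. (1) Let U_n be the n×n matrix over K whose (i,j)-entry is (−1)^{i−1} if i + j = n+1, (−1)^i if i + j = n+2, and 0 otherwise. Then U_n is invertible, and the matrix M := U_n⁻¹·U_nᵀ − (−1)^{n−1}·1 satisfies Mⁿ = 0 and M^{n−1} ≠ 0; in particular the canonical operator U_n⁻¹·U_nᵀ equals (−1)^{n−1}·1 plus a nilpotent matrix of nilpotency index exactly n. (2) For any invertible n×n matrix J over K, the 2n×2n block matrix G = [[0, 1_n],[J, 0]] is invertible and G⁻¹·Gᵀ equals the block-diagonal matrix [[J⁻¹, 0],[0, Jᵀ]]. -/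
open Matrix

/-- The `n×n` matrix `U_n`: with 1-based indices `(i,j)`, its entry is `(-1)^(i-1)` if
`i + j = n + 1`, `(-1)^i` if `i + j = n + 2`, and `0` otherwise (written with 0-based
indices). -/
def Umatrix (K : Type*) [Field K] (n : ℕ) : Matrix (Fin n) (Fin n) K :=
  Matrix.of fun i j =>
    if (i : ℕ) + (j : ℕ) + 1 = n then (-1 : K) ^ (i : ℕ)
    else if (i : ℕ) + (j : ℕ) = n then (-1 : K) ^ ((i : ℕ) + 1)
    else 0

section Aux

open Finset

variable {K : Type*} [Field K]

def Tmat (K : Type*) [Field K] (n : ℕ) (c : K) : Matrix (Fin n) (Fin n) K :=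
  Matrix.of fun i j => if (i : ℕ) < (j : ℕ) then c else 0

def Vmat (K : Type*) [Field K] (n : ℕ) : Matrix (Fin n) (Fin n) K :=
  Matrix.of fun i j => if (i : ℕ) + (j : ℕ) < n then (-1 : K) ^ (j : ℕ) else 0

lemma Uapply {n : ℕ} (i j : Fin n) :
    Umatrix K n i j = if (i : ℕ) + (j : ℕ) + 1 = n then (-1 : K) ^ (i : ℕ)
      else if (i : ℕ) + (j : ℕ) = n then (-1 : K) ^ ((i : ℕ) + 1) else 0 := rfl

lemma Vapply {n : ℕ} (i j : Fin n) :
    Vmat K n i j = if (i : ℕ) + (j : ℕ) < n then (-1 : K) ^ (j : ℕ) else 0 := rfl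

lemma Tapply {n : ℕ} {c : K} (i j : Fin n) :
    Tmat K n c i j = if (i : ℕ) < (j : ℕ) then c else 0 := rfl

lemma Tmat_pow_eq_zero_of {n : ℕ} {c : K} (k : ℕ) :
    ∀ i j : Fin n, (j : ℕ) < (i : ℕ) + k → (Tmat K n c ^ k) i j = 0 := by
  induction k with
  | zero =>
    intro i j hij
    have : i ≠ j := by intro h; subst h; omega
    simp [pow_zero, Matrix.one_apply_ne this]
  | succ k ih =>
    intro i j hij
    rw [pow_succ, Matrix.mul_apply]
    apply Finset.sum_eq_zero
    intro m _
    by_cases hm : (m : ℕ) < (i : ℕ) + k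
    · rw [ih i m hm, zero_mul]
    · have h2 : ¬ (m : ℕ) < (j : ℕ) := by omega
      rw [Tapply, if_neg h2, mul_zero]

lemma Tmat_pow_diag {n : ℕ} {c : K} (k : ℕ) :
    ∀ i j : Fin n, (j : ℕ) = (i : ℕ) + k → (Tmat K n c ^ k) i j = c ^ k := by
  induction k with
  | zero =>
    intro i j hij
    have : i = j := Fin.ext (by omega)
    subst this
    simp
  | succ k ih =>
    intro i j hij
    have hik : (i : ℕ) + k < n := by have := j.isLt; omega
    rw [pow_succ, Matrix.mul_apply]
    rw [Finset.sum_eq_single (⟨(i : ℕ) + k, hik⟩ : Fin n)]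
    · rw [ih i ⟨(i : ℕ) + k, hik⟩ rfl, Tapply]
      rw [if_pos (by simp; omega), pow_succ]
    · intro m _ hm
      by_cases h1 : (m : ℕ) < (i : ℕ) + k
      · rw [Tmat_pow_eq_zero_of k i m h1, zero_mul]
      · have h2 : ¬ (m : ℕ) < (j : ℕ) := by
          have : (m : ℕ) ≠ (i : ℕ) + k := fun h => hm (Fin.ext h)
          omega
        rw [Tapply, if_neg h2, mul_zero]
    · intro h
      exact absurd (Finset.mem_univ _) h

lemma U_mul_V {n : ℕ} (hn : 1 ≤ n) : Umatrix K n * Vmat K n = 1 := by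
  ext i j
  rw [Matrix.mul_apply]
  by_cases hi : (i : ℕ) = 0
  · rw [Finset.sum_eq_single (⟨n - 1, by omega⟩ : Fin n)
      (fun m _ hm => by
        rw [Uapply, if_neg (fun h => hm (Fin.ext (by simp only [Fin.val_mk]; omega))),
          if_neg (by have := m.isLt; omega), zero_mul])
      (fun h => absurd (Finset.mem_univ _) h)]
    have hU : Umatrix K n i ⟨n - 1, by omega⟩ = 1 := by
      rw [Uapply, if_pos (by simp only [Fin.val_mk]; omega), hi, pow_zero]
    by_cases hj : (j : ℕ) = 0
    · have hV : Vmat K n ⟨n - 1, by omega⟩ j = 1 := by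
        rw [Vapply, if_pos (by simp only [Fin.val_mk]; omega), hj, pow_zero]
      have hij : i = j := Fin.ext (by omega)
      rw [hU, hV, hij, Matrix.one_apply_eq, mul_one]
    · have hV : Vmat K n ⟨n - 1, by omega⟩ j = 0 := by
        rw [Vapply, if_neg (by simp only [Fin.val_mk]; omega)]
      rw [hV, mul_zero, Matrix.one_apply_ne (fun h => hj (by rw [Fin.ext_iff] at h; omega))]
  · have hin : (i : ℕ) < n := i.isLt
    rw [Finset.sum_eq_add_of_mem (⟨n - 1 - i, by omega⟩ : Fin n) (⟨n - i, by omega⟩ : Fin n)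
      (Finset.mem_univ _) (Finset.mem_univ _)
      (by rw [Ne, Fin.ext_iff]; simp only [Fin.val_mk]; omega)
      (fun m _ hm => by
        rw [Uapply, if_neg (fun h => hm.1 (Fin.ext (by simp only [Fin.val_mk]; omega))),
          if_neg (fun h => hm.2 (Fin.ext (by simp only [Fin.val_mk]; omega))), zero_mul])]
    have hUa : Umatrix K n i ⟨n - 1 - i, by omega⟩ = (-1) ^ (i : ℕ) := by
      rw [Uapply, if_pos (by simp only [Fin.val_mk]; omega)]
    have hUb : Umatrix K n i ⟨n - i, by omega⟩ = (-1) ^ ((i : ℕ) + 1) := by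
      rw [Uapply, if_neg (by simp only [Fin.val_mk]; omega),
        if_pos (by simp only [Fin.val_mk]; omega)]
    rcases lt_trichotomy (j : ℕ) (i : ℕ) with h | h | h
    · have hVa : Vmat K n ⟨n - 1 - i, by omega⟩ j = (-1) ^ (j : ℕ) := by
        rw [Vapply, if_pos (by simp only [Fin.val_mk]; omega)]
      have hVb : Vmat K n ⟨n - i, by omega⟩ j = (-1) ^ (j : ℕ) := by
        rw [Vapply, if_pos (by simp only [Fin.val_mk]; omega)]
      rw [hUa, hUb, hVa, hVb,
        Matrix.one_apply_ne (fun he => by rw [Fin.ext_iff] at he; omega), pow_succ]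
      ring
    · have hVa : Vmat K n ⟨n - 1 - i, by omega⟩ j = (-1) ^ (j : ℕ) := by
        rw [Vapply, if_pos (by simp only [Fin.val_mk]; omega)]
      have hVb : Vmat K n ⟨n - i, by omega⟩ j = 0 := by
        rw [Vapply, if_neg (by simp only [Fin.val_mk]; omega)]
      have hij : i = j := Fin.ext (by omega)
      rw [hUa, hVa, hVb, mul_zero, add_zero, ← pow_add, hij, Matrix.one_apply_eq]
      have h2 : (j : ℕ) + (j : ℕ) = 2 * (j : ℕ) := by omega
      rw [h2, pow_mul, neg_one_sq, one_pow]
    · have hVa : Vmat K n ⟨n - 1 - i, by omega⟩ j = 0 := by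
        rw [Vapply, if_neg (by simp only [Fin.val_mk]; omega)]
      have hVb : Vmat K n ⟨n - i, by omega⟩ j = 0 := by
        rw [Vapply, if_neg (by simp only [Fin.val_mk]; omega)]
      rw [hVa, hVb, mul_zero, mul_zero, add_zero,
        Matrix.one_apply_ne (fun he => by rw [Fin.ext_iff] at he; omega)]

lemma V_mul_UT {n : ℕ} (hn : 1 ≤ n) :
    Vmat K n * (Umatrix K n)ᵀ =
      (-1 : K) ^ (n - 1) • 1 + Tmat K n ((-1 : K) ^ (n - 1) * 2) := by
  ext i j
  rw [Matrix.mul_apply]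
  simp only [Matrix.transpose_apply]
  rw [Matrix.add_apply, Matrix.smul_apply, Tapply, smul_eq_mul]
  by_cases hj : (j : ℕ) = 0
  · rw [Finset.sum_eq_single (⟨n - 1, by omega⟩ : Fin n)
      (fun m _ hm => by
        rw [Uapply, if_neg (fun h => hm (Fin.ext (by simp only [Fin.val_mk]; omega))),
          if_neg (by have := m.isLt; omega), mul_zero])
      (fun h => absurd (Finset.mem_univ _) h)]
    have hU : Umatrix K n j ⟨n - 1, by omega⟩ = 1 := by
      rw [Uapply, if_pos (by simp only [Fin.val_mk]; omega), hj, pow_zero]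
    have hT : ¬ (i : ℕ) < (j : ℕ) := by omega
    rw [if_neg hT, add_zero]
    by_cases hij : (i : ℕ) = 0
    · have hV : Vmat K n i ⟨n - 1, by omega⟩ = (-1) ^ (n - 1) := by
        rw [Vapply, if_pos (by simp only [Fin.val_mk]; omega)]
      have hieq : i = j := Fin.ext (by omega)
      rw [hU, hV, mul_one, hieq, Matrix.one_apply_eq, mul_one]
    · have hV : Vmat K n i ⟨n - 1, by omega⟩ = 0 := by
        rw [Vapply, if_neg (by simp only [Fin.val_mk]; omega)]
      rw [hU, hV, mul_one,
        Matrix.one_apply_ne (fun h => hij (by rw [Fin.ext_iff] at h; omega)), mul_zero]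
  · have hjn : (j : ℕ) < n := j.isLt
    rw [Finset.sum_eq_add_of_mem (⟨n - 1 - j, by omega⟩ : Fin n) (⟨n - j, by omega⟩ : Fin n)
      (Finset.mem_univ _) (Finset.mem_univ _)
      (by rw [Ne, Fin.ext_iff]; simp only [Fin.val_mk]; omega)
      (fun m _ hm => by
        rw [Uapply, if_neg (fun h => hm.1 (Fin.ext (by simp only [Fin.val_mk]; omega))),
          if_neg (fun h => hm.2 (Fin.ext (by simp only [Fin.val_mk]; omega))), mul_zero])]
    have hUa : Umatrix K n j ⟨n - 1 - j, by omega⟩ = (-1) ^ (j : ℕ) := by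
      rw [Uapply, if_pos (by simp only [Fin.val_mk]; omega)]
    have hUb : Umatrix K n j ⟨n - j, by omega⟩ = (-1) ^ ((j : ℕ) + 1) := by
      rw [Uapply, if_neg (by simp only [Fin.val_mk]; omega),
        if_pos (by simp only [Fin.val_mk]; omega)]
    have e1 : (-1 : K) ^ (n - 1 - (j : ℕ)) * (-1) ^ ((j : ℕ)) = (-1) ^ (n - 1) := by
      rw [← pow_add]; congr 1; omega
    have e2 : (-1 : K) ^ (n - (j : ℕ)) * (-1) ^ ((j : ℕ) + 1) = (-1) ^ (n - 1) := by
      rw [← pow_add]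
      have h3 : n - (j : ℕ) + ((j : ℕ) + 1) = (n - 1) + 2 := by omega
      rw [h3, pow_add, neg_one_sq, mul_one]
    rcases lt_trichotomy (i : ℕ) (j : ℕ) with h | h | h
    · have hVa : Vmat K n i ⟨n - 1 - j, by omega⟩ = (-1) ^ (n - 1 - (j : ℕ)) := by
        rw [Vapply, if_pos (by simp only [Fin.val_mk]; omega)]
      have hVb : Vmat K n i ⟨n - j, by omega⟩ = (-1) ^ (n - (j : ℕ)) := by
        rw [Vapply, if_pos (by simp only [Fin.val_mk]; omega)]
      rw [hUa, hUb, hVa, hVb, e1, e2, if_pos h,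
        Matrix.one_apply_ne (fun he => by rw [Fin.ext_iff] at he; omega), mul_zero]
      ring
    · have hVa : Vmat K n i ⟨n - 1 - j, by omega⟩ = (-1) ^ (n - 1 - (j : ℕ)) := by
        rw [Vapply, if_pos (by simp only [Fin.val_mk]; omega)]
      have hVb : Vmat K n i ⟨n - j, by omega⟩ = 0 := by
        rw [Vapply, if_neg (by simp only [Fin.val_mk]; omega)]
      have hieq : i = j := Fin.ext h
      rw [hUa, hVa, hVb, zero_mul, add_zero, e1, if_neg (by omega : ¬ (i : ℕ) < (j : ℕ)),
        hieq, Matrix.one_apply_eq, mul_one, add_zero]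
    · have hVa : Vmat K n i ⟨n - 1 - j, by omega⟩ = 0 := by
        rw [Vapply, if_neg (by simp only [Fin.val_mk]; omega)]
      have hVb : Vmat K n i ⟨n - j, by omega⟩ = 0 := by
        rw [Vapply, if_neg (by simp only [Fin.val_mk]; omega)]
      rw [hVa, hVb, zero_mul, zero_mul, add_zero, if_neg (by omega : ¬ (i : ℕ) < (j : ℕ)),
        Matrix.one_apply_ne (fun he => by rw [Fin.ext_iff] at he; omega), mul_zero, add_zero]

end Aux

/-- Canonical operators of the two types of indecomposable Mukai spaces:
(1) `U_n` is invertible and `U_n⁻¹·U_nᵀ = (-1)^(n-1)·1 + M` with `Mⁿ = 0`, `M^(n-1) ≠ 0`;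
(2) for invertible `J`, the block matrix `G = [[0,1],[J,0]]` is invertible and
`G⁻¹·Gᵀ = [[J⁻¹,0],[0,Jᵀ]]`. -/
theorem stmt_5 {K : Type*} [Field K] [CharZero K] (n : ℕ) (hn : 1 ≤ n) :
    (IsUnit (Umatrix K n) ∧
      ((Umatrix K n)⁻¹ * (Umatrix K n)ᵀ -
          (-1 : K) ^ (n - 1) • (1 : Matrix (Fin n) (Fin n) K)) ^ n = 0 ∧
      ((Umatrix K n)⁻¹ * (Umatrix K n)ᵀ -
          (-1 : K) ^ (n - 1) • (1 : Matrix (Fin n) (Fin n) K)) ^ (n - 1) ≠ 0) ∧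
    ∀ J : Matrix (Fin n) (Fin n) K, IsUnit J →
      IsUnit (Matrix.fromBlocks (0 : Matrix (Fin n) (Fin n) K) (1 : Matrix (Fin n) (Fin n) K) J (0 : Matrix (Fin n) (Fin n) K)) ∧
      (Matrix.fromBlocks (0 : Matrix (Fin n) (Fin n) K) (1 : Matrix (Fin n) (Fin n) K) J (0 : Matrix (Fin n) (Fin n) K))⁻¹ *
          (Matrix.fromBlocks (0 : Matrix (Fin n) (Fin n) K) (1 : Matrix (Fin n) (Fin n) K) J (0 : Matrix (Fin n) (Fin n) K))ᵀ =
        Matrix.fromBlocks J⁻¹ 0 0 Jᵀ := by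
  have hUV : Umatrix K n * Vmat K n = 1 := U_mul_V hn
  have hU : IsUnit (Umatrix K n) :=
    ⟨⟨Umatrix K n, Vmat K n, hUV, mul_eq_one_comm.mp hUV⟩, rfl⟩
  have hinv : (Umatrix K n)⁻¹ = Vmat K n := Matrix.inv_eq_right_inv hUV
  set c : K := (-1 : K) ^ (n - 1) * 2 with hc
  have hM : (Umatrix K n)⁻¹ * (Umatrix K n)ᵀ -
      (-1 : K) ^ (n - 1) • (1 : Matrix (Fin n) (Fin n) K) = Tmat K n c := by
    rw [hinv, V_mul_UT hn, add_sub_cancel_left]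
  have hc0 : c ≠ 0 := mul_ne_zero (pow_ne_zero _ (neg_ne_zero.mpr one_ne_zero)) two_ne_zero
  refine ⟨⟨hU, ?_, ?_⟩, ?_⟩
  · rw [hM]
    ext i j
    rw [Matrix.zero_apply]
    exact Tmat_pow_eq_zero_of n i j (by have := j.isLt; omega)
  · rw [hM]
    intro h
    have h2 := Tmat_pow_diag (K := K) (n := n) (c := c) (n - 1)
      ⟨0, by omega⟩ ⟨n - 1, by omega⟩ (by simp)
    rw [h, Matrix.zero_apply] at h2
    exact pow_ne_zero _ hc0 h2.symm
  · intro J hJ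
    have hJd : IsUnit J.det := (Matrix.isUnit_iff_isUnit_det J).mp hJ
    have h1 : J * J⁻¹ = 1 := Matrix.mul_nonsing_inv J hJd
    have hG : Matrix.fromBlocks (0 : Matrix (Fin n) (Fin n) K) 1 J 0 *
        Matrix.fromBlocks 0 J⁻¹ 1 0 = 1 := by
      rw [Matrix.fromBlocks_multiply]
      simp [h1, Matrix.fromBlocks_one]
    refine ⟨⟨⟨_, _, hG, mul_eq_one_comm.mp hG⟩, rfl⟩, ?_⟩
    rw [Matrix.inv_eq_right_inv hG, Matrix.fromBlocks_transpose, Matrix.fromBlocks_multiply]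
    simp
end

section
/- Let K be a field, V a K-vector space, B a bilinear form on V (not necessarily symmetric or nondegenerate), and f a linear endomorphism of V which is an isometry of B, i.e. B(f(x), f(y)) = B(x, y) for all x, y ∈ V. If λ, μ ∈ K satisfy λ·μ ≠ 1, then B(x, y) = 0 for every x in the generalized eigenspace of f for λ and every y in the generalized eigenspace of f for μ. -/
private lemma aux_6 {K V : Type*} [Field K] [AddCommGroup V] [Module K V]
    (B : V →ₗ[K] V →ₗ[K] K) (f : Module.End K V)
    (hf : ∀ x y, B (f x) (f y) = B x y)
    (lam mu : K) (h : lam * mu ≠ 1) :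
    ∀ n m m', m + m' ≤ n → ∀ x y,
      ((f - lam • (LinearMap.id : Module.End K V)) ^ m) x = 0 →
      ((f - mu • (LinearMap.id : Module.End K V)) ^ m') y = 0 → B x y = 0 := by
  intro n
  induction n with
  | zero =>
    intro m m' hmm x y hx hy
    obtain ⟨rfl, rfl⟩ : m = 0 ∧ m' = 0 := by omega
    simp only [pow_zero, Module.End.one_apply] at hx
    subst hx; simp
  | succ n ih =>
    intro m m' hmm x y hx hy
    match m, m' with
    | 0, m' =>
      simp only [pow_zero, Module.End.one_apply] at hx
      subst hx; simp
    | m, 0 =>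
      simp only [pow_zero, Module.End.one_apply] at hy
      subst hy; simp
    | k + 1, l + 1 =>
      set u := (f - lam • (LinearMap.id : Module.End K V)) x with hu
      set v := (f - mu • (LinearMap.id : Module.End K V)) y with hv
      have hxu : ((f - lam • (LinearMap.id : Module.End K V)) ^ k) u = 0 := by
        rw [hu, ← Module.End.mul_apply, ← pow_succ]; exact hx
      have hyv : ((f - mu • (LinearMap.id : Module.End K V)) ^ l) v = 0 := by
        rw [hv, ← Module.End.mul_apply, ← pow_succ]; exact hy
      have hfx : f x = u + lam • x := by
        rw [hu]; simp [LinearMap.sub_apply]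
      have hfy : f y = v + mu • y := by
        rw [hv]; simp [LinearMap.sub_apply]
      have h1 : B u v = 0 := ih k l (by omega) u v hxu hyv
      have h2 : B u y = 0 := ih k (l + 1) (by omega) u y hxu hy
      have h3 : B x v = 0 := ih (k + 1) l (by omega) x v hx hyv
      have key : B x y = lam * mu * B x y := by
        conv_lhs => rw [← hf x y, hfx, hfy]
        simp only [map_add, map_smul, LinearMap.add_apply, LinearMap.smul_apply,
          h1, h2, h3, smul_eq_mul]
        ring
      have : (1 - lam * mu) * B x y = 0 := by linear_combination key
      rcases mul_eq_zero.mp this with h' | h'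
      · exact absurd (by linear_combination -h') h
      · exact h'

/-- If `f` is an isometry of a bilinear form `B` and `λ·μ ≠ 1`, then the generalized
eigenspaces of `f` for `λ` and `μ` are orthogonal: `B(x, y) = 0` whenever
`(f - λ·id)^m x = 0` and `(f - μ·id)^m' y = 0` for some `m, m' ≥ 1`. -/
theorem stmt_6 {K V : Type*} [Field K] [AddCommGroup V] [Module K V]
    (B : V →ₗ[K] V →ₗ[K] K) (f : Module.End K V)
    (hf : ∀ x y, B (f x) (f y) = B x y)
    (lam mu : K) (h : lam * mu ≠ 1) (x y : V)
    (hx : ∃ m : ℕ, 1 ≤ m ∧ ((f - lam • (LinearMap.id : Module.End K V)) ^ m) x = 0)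
    (hy : ∃ m : ℕ, 1 ≤ m ∧ ((f - mu • (LinearMap.id : Module.End K V)) ^ m) y = 0) :
    B x y = 0 := by
  obtain ⟨m, -, hx⟩ := hx
  obtain ⟨m', -, hy⟩ := hy
  exact aux_6 B f hf lam mu h (m + m') m m' le_rfl x y hx hy
end

section
/- Let K be an algebraically closed field of characteristic zero, V a nonzero finite-dimensional K-vector space, B a nondegenerate bilinear form on V (not necessarily symmetric), and f a linear endomorphism of V with B(f(x), f(y)) = B(x, y) for all x, y. For λ ∈ K let V_λ := ⋃_{m ≥ 1} ker (f − λ·id)^m be the generalized eigenspace. Then: (1) the restriction of B to V_1 × V_1 is nondegenerate, and likewise the restriction to V_{−1} × V_{−1}; (2) if λ² ≠ 1 then V_λ is totally isotropic, i.e. B(x, y) = 0 for all x, y ∈ V_λ; (3) for every λ ≠ 0, the pairing V_λ × V_{λ⁻¹} → K induced by B is nondegenerate: for every nonzero x ∈ V_λ there is y ∈ V_{λ⁻¹} with B(x, y) ≠ 0, and for every nonzero y ∈ V_{λ⁻¹} there is x ∈ V_λ with B(x, y) ≠ 0. -/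
/-- `x` lies in the generalized eigenspace of `f` for the eigenvalue `lam`,
i.e. `(f - lam·id)^m x = 0` for some `m ≥ 1`. -/
def IsGenEigVec {K V : Type*} [Field K] [AddCommGroup V] [Module K V]
    (f : Module.End K V) (lam : K) (x : V) : Prop :=
  ∃ m : ℕ, 1 ≤ m ∧ ((f - lam • (LinearMap.id : Module.End K V)) ^ m) x = 0

lemma isGenEigVec_iff_mem {K V : Type*} [Field K] [AddCommGroup V] [Module K V]
    (f : Module.End K V) (lam : K) (x : V) :
    IsGenEigVec f lam x ↔ x ∈ f.maxGenEigenspace lam := by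
  rw [Module.End.mem_maxGenEigenspace]
  simp only [Module.End.one_eq_id]
  constructor
  · rintro ⟨m, -, hm⟩; exact ⟨m, hm⟩
  · rintro ⟨k, hk⟩
    refine ⟨k + 1, by omega, ?_⟩
    rw [pow_succ', Module.End.mul_apply, hk, map_zero]

/-- Orthogonality of generalized eigenspaces for `λμ ≠ 1`. -/
lemma ortho_aux {K V : Type*} [Field K] [AddCommGroup V] [Module K V]
    (B : V →ₗ[K] V →ₗ[K] K) (f : Module.End K V)
    (hf : ∀ x y, B (f x) (f y) = B x y)
    (lam mu : K) (hlm : lam * mu ≠ 1) :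
    ∀ n m k : ℕ, m + k ≤ n → ∀ x y : V,
      ((f - lam • (LinearMap.id : Module.End K V)) ^ m) x = 0 →
      ((f - mu • (LinearMap.id : Module.End K V)) ^ k) y = 0 →
      B x y = 0 := by
  intro n
  induction n with
  | zero =>
    intro m k hmk x y hx hy
    have hm : m = 0 := by omega
    subst hm
    rw [pow_zero, Module.End.one_apply] at hx
    rw [hx]; simp
  | succ n ih =>
    intro m k hmk x y hx hy
    match m, k with
    | 0, _ =>
      rw [pow_zero, Module.End.one_apply] at hx
      rw [hx]; simp
    | _, 0 =>
      rw [pow_zero, Module.End.one_apply] at hy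
      rw [hy]; simp
    | m + 1, k + 1 =>
      set g : Module.End K V := f - lam • LinearMap.id with hg
      set h : Module.End K V := f - mu • LinearMap.id with hh
      have hx' : (g ^ m) (g x) = 0 := by
        rw [← Module.End.mul_apply, ← pow_succ]; exact hx
      have hy' : (h ^ k) (h y) = 0 := by
        rw [← Module.End.mul_apply, ← pow_succ]; exact hy
      have hfx : f x = g x + lam • x := by
        simp [hg, LinearMap.sub_apply]
      have hfy : f y = h y + mu • y := by
        simp [hh, LinearMap.sub_apply]
      have key : B x y = B (g x) (h y) + mu * B (g x) y + lam * B x (h y)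
          + (lam * mu) * B x y := by
        have := hf x y
        rw [hfx, hfy] at this
        simp only [map_add, map_smul, LinearMap.add_apply, LinearMap.smul_apply,
          smul_eq_mul] at this
        linear_combination -this
      have h1 : B (g x) (h y) = 0 := ih m k (by omega) _ _ hx' hy'
      have h2 : B (g x) y = 0 := ih m (k + 1) (by omega) _ _ hx' hy
      have h3 : B x (h y) = 0 := ih (m + 1) k (by omega) _ _ hx hy'
      rw [h1, h2, h3] at key
      have : (1 - lam * mu) * B x y = 0 := by linear_combination key
      rcases mul_eq_zero.mp this with h' | h'
      · exact absurd (by linear_combination -h') hlm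
      · exact h'

lemma ortho {K V : Type*} [Field K] [AddCommGroup V] [Module K V]
    (B : V →ₗ[K] V →ₗ[K] K) (f : Module.End K V)
    (hf : ∀ x y, B (f x) (f y) = B x y)
    (lam mu : K) (hlm : lam * mu ≠ 1) (x y : V)
    (hx : x ∈ f.maxGenEigenspace lam) (hy : y ∈ f.maxGenEigenspace mu) :
    B x y = 0 := by
  rw [← isGenEigVec_iff_mem] at hx hy
  obtain ⟨m, -, hm⟩ := hx
  obtain ⟨k, -, hk⟩ := hy
  exact ortho_aux B f hf lam mu hlm (m + k) m k le_rfl x y hm hk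

lemma pairing_left {K V : Type*} [Field K] [IsAlgClosed K]
    [AddCommGroup V] [Module K V] [FiniteDimensional K V]
    (B : V →ₗ[K] V →ₗ[K] K)
    (hBl : ∀ x, (∀ y, B x y = 0) → x = 0)
    (f : Module.End K V) (hf : ∀ x y, B (f x) (f y) = B x y)
    (lam : K) (hlam : lam ≠ 0) (x : V) (hx : IsGenEigVec f lam x)
    (h0 : ∀ y, IsGenEigVec f lam⁻¹ y → B x y = 0) : x = 0 := by
  rw [isGenEigVec_iff_mem] at hx
  apply hBl
  have hsup : ⨆ μ : K, f.maxGenEigenspace μ ≤ LinearMap.ker (B x) := by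
    refine iSup_le fun μ y hy => ?_
    rw [LinearMap.mem_ker]
    by_cases hμ : μ = lam⁻¹
    · exact h0 y (by rw [isGenEigVec_iff_mem, ← hμ] at *; exact hy)
    · refine ortho B f hf lam μ ?_ x y hx hy
      intro h
      exact hμ (mul_left_cancel₀ hlam (by rw [h, mul_inv_cancel₀ hlam]))
  rw [Module.End.iSup_maxGenEigenspace_eq_top] at hsup
  intro y
  exact hsup (Submodule.mem_top (x := y))

lemma pairing_right {K V : Type*} [Field K] [IsAlgClosed K]
    [AddCommGroup V] [Module K V] [FiniteDimensional K V]
    (B : V →ₗ[K] V →ₗ[K] K)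
    (hBr : ∀ y, (∀ x, B x y = 0) → y = 0)
    (f : Module.End K V) (hf : ∀ x y, B (f x) (f y) = B x y)
    (lam : K) (hlam : lam ≠ 0) (y : V) (hy : IsGenEigVec f lam⁻¹ y)
    (h0 : ∀ x, IsGenEigVec f lam x → B x y = 0) : y = 0 := by
  rw [isGenEigVec_iff_mem] at hy
  apply hBr
  have hsup : ⨆ μ : K, f.maxGenEigenspace μ ≤ LinearMap.ker (B.flip y) := by
    refine iSup_le fun μ x hx => ?_
    rw [LinearMap.mem_ker, LinearMap.flip_apply]
    by_cases hμ : μ = lam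
    · exact h0 x (by rw [isGenEigVec_iff_mem, ← hμ] at *; exact hx)
    · refine ortho B f hf μ lam⁻¹ ?_ x y hx hy
      intro h
      apply hμ
      have : μ * lam⁻¹ * lam = 1 * lam := by rw [h]
      rwa [mul_assoc, inv_mul_cancel₀ hlam, mul_one, one_mul] at this
  rw [Module.End.iSup_maxGenEigenspace_eq_top] at hsup
  intro x
  have := hsup (Submodule.mem_top (x := x))
  rwa [LinearMap.mem_ker, LinearMap.flip_apply] at this

/-- For an isometry `f` of a nondegenerate bilinear form `B` on a nonzero
finite-dimensional space over an algebraically closed field of characteristic zero: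
(1) the restrictions of `B` to the generalized eigenspaces `V₁` and `V₋₁` are nondegenerate;
(2) if `λ² ≠ 1` then `V_λ` is totally isotropic;
(3) for `λ ≠ 0` the pairing between `V_λ` and `V_{λ⁻¹}` induced by `B` is nondegenerate. -/
theorem stmt_7 {K V : Type*} [Field K] [IsAlgClosed K] [CharZero K]
    [AddCommGroup V] [Module K V] [FiniteDimensional K V] [Nontrivial V]
    (B : V →ₗ[K] V →ₗ[K] K)
    (hBl : ∀ x, (∀ y, B x y = 0) → x = 0) (hBr : ∀ y, (∀ x, B x y = 0) → y = 0)
    (f : Module.End K V) (hf : ∀ x y, B (f x) (f y) = B x y) :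
    ((∀ x, IsGenEigVec f 1 x → (∀ y, IsGenEigVec f 1 y → B x y = 0) → x = 0) ∧
     (∀ y, IsGenEigVec f 1 y → (∀ x, IsGenEigVec f 1 x → B x y = 0) → y = 0) ∧
     (∀ x, IsGenEigVec f (-1) x → (∀ y, IsGenEigVec f (-1) y → B x y = 0) → x = 0) ∧
     (∀ y, IsGenEigVec f (-1) y → (∀ x, IsGenEigVec f (-1) x → B x y = 0) → y = 0)) ∧
    (∀ lam : K, lam ^ 2 ≠ 1 →
      ∀ x y, IsGenEigVec f lam x → IsGenEigVec f lam y → B x y = 0) ∧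
    (∀ lam : K, lam ≠ 0 →
      (∀ x, IsGenEigVec f lam x → x ≠ 0 → ∃ y, IsGenEigVec f lam⁻¹ y ∧ B x y ≠ 0) ∧
      (∀ y, IsGenEigVec f lam⁻¹ y → y ≠ 0 → ∃ x, IsGenEigVec f lam x ∧ B x y ≠ 0)) := by
  have inv_one' : (1 : K)⁻¹ = 1 := inv_one
  have inv_neg_one' : (-1 : K)⁻¹ = -1 := by rw [inv_neg, inv_one]
  refine ⟨⟨?_, ?_, ?_, ?_⟩, ?_, ?_⟩
  · intro x hx h
    exact pairing_left B hBl f hf 1 one_ne_zero x hx (by rw [inv_one']; exact h)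
  · intro y hy h
    exact pairing_right B hBr f hf 1 one_ne_zero y (by rw [inv_one']; exact hy) h
  · intro x hx h
    exact pairing_left B hBl f hf (-1) (by norm_num) x hx (by rw [inv_neg_one']; exact h)
  · intro y hy h
    exact pairing_right B hBr f hf (-1) (by norm_num) y (by rw [inv_neg_one']; exact hy) h
  · intro lam hlam x y hx hy
    rw [isGenEigVec_iff_mem] at hx hy
    refine ortho B f hf lam lam ?_ x y hx hy
    rwa [← sq]
  · intro lam hlam
    constructor
    · intro x hx hx0
      by_contra h
      push_neg at h
      exact hx0 (pairing_left B hBl f hf lam hlam x hx fun y hy => h y hy)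
    · intro y hy hy0
      by_contra h
      push_neg at h
      exact hy0 (pairing_right B hBr f hf lam hlam y hy fun x hx => h x hx)
end

section
/- Let V be a free ℤ-module of finite rank n+1 with a bilinear form ⟨·,·⟩ (not necessarily symmetric), and let ε = (e₀,…,e_n) be an exceptional basis of V. Then, as equalities of (n+1)-tuples of elements of V: (1) L_i(R_i ε) = R_i(L_i ε) = ε for all 1 ≤ i ≤ n; (2) L_i(L_j ε) = L_j(L_i ε) whenever |i − j| > 1; (3) L_i(L_{i+1}(L_i ε)) = L_{i+1}(L_i(L_{i+1} ε)) for all 1 ≤ i ≤ n−1. In particular the left mutations satisfy the braid relations on the set of exceptional bases, so the braid group on n+1 strands acts by mutations on exceptional bases of V. -/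
/-- Left mutation of the tuple `e` at the neighbouring pair of positions `(j, j+1)`
(in the paper's notation, `L_i` with `i = j + 1` replaces `(e_{i-1}, e_i)` by
`(e_i - ⟨e_{i-1}, e_i⟩ e_{i-1}, e_{i-1})`). -/
def leftMut {V : Type*} [AddCommGroup V] [Module ℤ V] (B : V →ₗ[ℤ] V →ₗ[ℤ] ℤ)
    {n : ℕ} (e : Fin (n + 1) → V) (j : Fin n) : Fin (n + 1) → V :=
  fun k =>
    if k = j.castSucc then e j.succ - B (e j.castSucc) (e j.succ) • e j.castSucc
    else if k = j.succ then e j.castSucc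
    else e k

/-- Right mutation of the tuple `e` at the neighbouring pair of positions `(j, j+1)`
(in the paper's notation, `R_i` with `i = j + 1` replaces `(e_{i-1}, e_i)` by
`(e_i, e_{i-1} - ⟨e_{i-1}, e_i⟩ e_i)`). -/
def rightMut {V : Type*} [AddCommGroup V] [Module ℤ V] (B : V →ₗ[ℤ] V →ₗ[ℤ] ℤ)
    {n : ℕ} (e : Fin (n + 1) → V) (j : Fin n) : Fin (n + 1) → V :=
  fun k =>
    if k = j.castSucc then e j.succ
    else if k = j.succ then e j.castSucc - B (e j.castSucc) (e j.succ) • e j.succ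
    else e k

/-! A mutation changes only two adjacent entries, so mutations at distant positions commute and
everything else is an identity among two or three vectors. For an exceptional pair `(x, y)`,
i.e. `⟨y, x⟩ = 0`, mutating one vector across a normalised other one negates their pairing, which
is why `L_i` and `R_i` are mutually inverse. For the braid relation the point is that
`⟨y - ⟨x, y⟩ x, z - ⟨x, z⟩ x⟩ = ⟨y, z⟩` when `⟨x, x⟩ = 1` and `⟨y, x⟩ = 0`; after that it is a
linear identity in three vectors. -/

section Mutation

variable {V : Type*} [AddCommGroup V] [Module ℤ V] (B : V →ₗ[ℤ] V →ₗ[ℤ] ℤ)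

section Form

variable {x y z : V}

theorem form_sub_smul_right (hyx : B y x = 0) (hyy : B y y = 1) :
    B y (x - B x y • y) = -B x y := by
  simp [hyx, hyy]

theorem form_sub_smul_left (hyx : B y x = 0) (hxx : B x x = 1) :
    B (y - B x y • x) x = -B x y := by
  simp [hyx, hxx]

theorem form_sub_smul_sub_smul (hxx : B x x = 1) (hyx : B y x = 0) :
    B (y - B x y • x) (z - B x z • x) = B y z := by
  simp [hxx, hyx]

end Form

variable {n : ℕ} (e : Fin (n + 1) → V)

@[simp]
theorem leftMut_apply_castSucc (j : Fin n) :
    leftMut B e j j.castSucc = e j.succ - B (e j.castSucc) (e j.succ) • e j.castSucc := by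
  simp [leftMut]

@[simp]
theorem leftMut_apply_succ (j : Fin n) : leftMut B e j j.succ = e j.castSucc := by
  simp [leftMut, Fin.castSucc_lt_succ.ne']

theorem leftMut_apply_of_ne (j : Fin n) {k : Fin (n + 1)} (hk₁ : k ≠ j.castSucc)
    (hk₂ : k ≠ j.succ) : leftMut B e j k = e k := by
  simp [leftMut, hk₁, hk₂]

@[simp]
theorem rightMut_apply_castSucc (j : Fin n) : rightMut B e j j.castSucc = e j.succ := by
  simp [rightMut]

@[simp]
theorem rightMut_apply_succ (j : Fin n) :
    rightMut B e j j.succ = e j.castSucc - B (e j.castSucc) (e j.succ) • e j.succ := by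
  simp [rightMut, Fin.castSucc_lt_succ.ne']

theorem rightMut_apply_of_ne (j : Fin n) {k : Fin (n + 1)} (hk₁ : k ≠ j.castSucc)
    (hk₂ : k ≠ j.succ) : rightMut B e j k = e k := by
  simp [rightMut, hk₁, hk₂]

theorem leftMut_rightMut (j : Fin n) (hyx : B (e j.succ) (e j.castSucc) = 0)
    (hyy : B (e j.succ) (e j.succ) = 1) : leftMut B (rightMut B e j) j = e := by
  funext k
  obtain rfl | rfl | ⟨hk₁, hk₂⟩ : k = j.castSucc ∨ k = j.succ ∨ k ≠ j.castSucc ∧ k ≠ j.succ := by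
    tauto
  · simp [form_sub_smul_right B hyx hyy]
  · simp
  · simp [leftMut_apply_of_ne, rightMut_apply_of_ne, hk₁, hk₂]

theorem rightMut_leftMut (j : Fin n) (hyx : B (e j.succ) (e j.castSucc) = 0)
    (hxx : B (e j.castSucc) (e j.castSucc) = 1) : rightMut B (leftMut B e j) j = e := by
  funext k
  obtain rfl | rfl | ⟨hk₁, hk₂⟩ : k = j.castSucc ∨ k = j.succ ∨ k ≠ j.castSucc ∧ k ≠ j.succ := by
    tauto
  · simp
  · simp only [rightMut_apply_succ, leftMut_apply_castSucc, leftMut_apply_succ,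
      form_sub_smul_left B hyx hxx, neg_zsmul, sub_neg_eq_add, sub_add_cancel]
  · simp [leftMut_apply_of_ne, rightMut_apply_of_ne, hk₁, hk₂]

theorem leftMut_comm {i j : Fin n} (hij : (i : ℕ) + 1 < j ∨ (j : ℕ) + 1 < i) :
    leftMut B (leftMut B e j) i = leftMut B (leftMut B e i) j := by
  obtain ⟨h₁, h₂, h₃, h₄⟩ : i.castSucc ≠ j.castSucc ∧ i.castSucc ≠ j.succ ∧
      i.succ ≠ j.castSucc ∧ i.succ ≠ j.succ := by
    simp only [ne_eq, Fin.ext_iff, Fin.val_castSucc, Fin.val_succ]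
    omega
  funext k
  obtain rfl | rfl | rfl | rfl | ⟨hk₁, hk₂, hk₃, hk₄⟩ :
      k = i.castSucc ∨ k = i.succ ∨ k = j.castSucc ∨ k = j.succ ∨
        (k ≠ i.castSucc ∧ k ≠ i.succ ∧ k ≠ j.castSucc ∧ k ≠ j.succ) := by
    tauto
  all_goals simp [leftMut_apply_of_ne, h₁.symm, h₂.symm, h₃.symm, h₄.symm, *]

theorem leftMut_braid {i j : Fin n} (hij : j.castSucc = i.succ)
    (hxx : B (e i.castSucc) (e i.castSucc) = 1) (hyx : B (e i.succ) (e i.castSucc) = 0) :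
    leftMut B (leftMut B (leftMut B e i) j) i = leftMut B (leftMut B (leftMut B e j) i) j := by
  have hab : i.castSucc ≠ i.succ := Fin.castSucc_lt_succ.ne
  have hac : i.castSucc ≠ j.succ := by
    simp only [ne_eq, Fin.ext_iff, Fin.val_castSucc, Fin.val_succ] at hij ⊢
    omega
  have hbc : i.succ ≠ j.succ := hij ▸ Fin.castSucc_lt_succ.ne
  have hja (f : Fin (n + 1) → V) : leftMut B f j i.castSucc = f i.castSucc :=
    leftMut_apply_of_ne B f j (hij ▸ hab) hac
  have hjb (f : Fin (n + 1) → V) :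
      leftMut B f j i.succ = f j.succ - B (f i.succ) (f j.succ) • f i.succ :=
    hij ▸ leftMut_apply_castSucc B f j
  have hjc (f : Fin (n + 1) → V) : leftMut B f j j.succ = f i.succ :=
    hij ▸ leftMut_apply_succ B f j
  have hic (f : Fin (n + 1) → V) : leftMut B f i j.succ = f j.succ :=
    leftMut_apply_of_ne B f i hac.symm hbc.symm
  funext k
  obtain rfl | rfl | rfl | ⟨hka, hkb, hkc⟩ :
      k = i.castSucc ∨ k = i.succ ∨ k = j.succ ∨
        (k ≠ i.castSucc ∧ k ≠ i.succ ∧ k ≠ j.succ) := by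
    tauto
  · simp only [leftMut_apply_castSucc, leftMut_apply_succ, hja, hjb, hic]
    rw [form_sub_smul_sub_smul B hxx hyx]
    simp only [map_sub, map_zsmul, smul_eq_mul, zsmul_sub, sub_zsmul, mul_zsmul]
    abel
  · simp only [leftMut_apply_castSucc, leftMut_apply_succ, hja, hjb, hjc, hic]
  · simp only [leftMut_apply_succ, hja, hjc, hic]
  · have hkb' : k ≠ j.castSucc := hij ▸ hkb
    simp only [leftMut_apply_of_ne B _ i hka hkb, leftMut_apply_of_ne B _ j hkb' hkc]

end Mutation

/-- Mutations of an exceptional basis of a Mukai lattice satisfy: left and right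
mutations at the same position are mutually inverse, distant left mutations commute,
and consecutive left mutations satisfy the braid relation; hence the braid group
acts by mutations on exceptional bases. -/
theorem stmt_9 {V : Type*} [AddCommGroup V] [Module ℤ V] {n : ℕ}
    (B : V →ₗ[ℤ] V →ₗ[ℤ] ℤ)
    (e : Module.Basis (Fin (n + 1)) ℤ V)
    (h1 : ∀ i, B (e i) (e i) = 1)
    (h2 : ∀ i j : Fin (n + 1), i < j → B (e j) (e i) = 0) :
    (∀ i : Fin n,
      leftMut B (rightMut B (⇑e) i) i = ⇑e ∧ rightMut B (leftMut B (⇑e) i) i = ⇑e) ∧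
    (∀ i j : Fin n, ((i : ℕ) + 1 < (j : ℕ) ∨ (j : ℕ) + 1 < (i : ℕ)) →
      leftMut B (leftMut B (⇑e) j) i = leftMut B (leftMut B (⇑e) i) j) ∧
    (∀ i j : Fin n, (j : ℕ) = (i : ℕ) + 1 →
      leftMut B (leftMut B (leftMut B (⇑e) i) j) i =
        leftMut B (leftMut B (leftMut B (⇑e) j) i) j) := by
  have horth (i : Fin n) : B (e i.succ) (e i.castSucc) = 0 := h2 _ _ Fin.castSucc_lt_succ
  refine ⟨fun i => ⟨leftMut_rightMut B e i (horth i) (h1 _),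
    rightMut_leftMut B e i (horth i) (h1 _)⟩, fun i j hij => leftMut_comm B e hij,
    fun i j hij => leftMut_braid B e ?_ (h1 _) (horth i)⟩
  exact Fin.ext (by simp [hij])
end

section
/- Fix an integer k ≥ 1. Let η be the k×k complex matrix with η_{ab} = 1 if a + b = k + 1 and η_{ab} = 0 otherwise (indices 1 ≤ a,b ≤ k), and for 0 ≤ i ≤ k−1 let J_i be the k×k matrix with (J_i)_{ab} = 1 if a − b = i and 0 otherwise. Let α₀, α₁, …, α_{k−1} ∈ ℂ with α₀ = 1. Then the identity (Σ_{i=0}^{k−1} (−1)^i α_i z^i J_i)ᵀ · η · (Σ_{i=0}^{k−1} α_i z^i J_i) = η holds for every z ∈ ℂ if and only if 2α_{2n} + Σ_{i+j=2n, i≥1, j≥1} (−1)^i α_i α_j = 0 for every integer n with 2 ≤ 2n ≤ k−1. -/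
open Matrix

/-- The `k×k` matrix `η` of the Poincaré pairing of `ℙ^{k-1}`: with 1-based indices,
`η a b = 1` if `a + b = k + 1` and `0` otherwise. -/
def etaMat (k : ℕ) : Matrix (Fin k) (Fin k) ℂ :=
  Matrix.of fun a b => if (a : ℕ) + (b : ℕ) + 1 = k then 1 else 0

/-- The `k×k` matrix `J_i`: with 1-based indices, `(J_i) a b = 1` if `a - b = i`
and `0` otherwise. -/
def Jmat (k i : ℕ) : Matrix (Fin k) (Fin k) ℂ :=
  Matrix.of fun a b => if (a : ℕ) = (b : ℕ) + i then 1 else 0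


lemma sum_indicator (n t : ℕ) (g : ℕ → ℂ) :
    ∑ c ∈ Finset.range n, (if c = t then g c else 0) = if t < n then g t else 0 := by
  simp only [Finset.sum_ite_eq' (Finset.range n) t g, Finset.mem_range]

lemma Jmul (k i j : ℕ) : Jmat k i * Jmat k j = Jmat k (i + j) := by
  ext a b
  simp only [Jmat, Matrix.mul_apply, Matrix.of_apply]
  rw [Fin.sum_univ_eq_sum_range (fun c => (if (a:ℕ) = c + i then (1:ℂ) else 0) * (if c = (b:ℕ) + j then 1 else 0))]
  have h1 : ∑ c ∈ Finset.range k, (if (a:ℕ) = c + i then (1:ℂ) else 0) * (if c = (b:ℕ) + j then 1 else 0)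
      = ∑ c ∈ Finset.range k, (if c = (b:ℕ) + j then (if (a:ℕ) = ((b:ℕ)+j) + i then (1:ℂ) else 0) else 0) := by
    refine Finset.sum_congr rfl fun c _ => ?_
    by_cases h : c = (b:ℕ) + j <;> simp [h]
  rw [h1, sum_indicator]
  by_cases hbj : (b:ℕ) + j < k
  · rw [if_pos hbj, show (b:ℕ) + j + i = (b:ℕ) + (i + j) by omega]
  · rw [if_neg hbj, if_neg (by omega)]

lemma etaJ (k i : ℕ) : etaMat k * Jmat k i = (Jmat k i)ᵀ * etaMat k := by
  ext a b
  simp only [etaMat, Jmat, Matrix.mul_apply, Matrix.of_apply, Matrix.transpose_apply]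
  rw [Fin.sum_univ_eq_sum_range (fun c => (if (a:ℕ) + c + 1 = k then (1:ℂ) else 0) * (if c = (b:ℕ) + i then 1 else 0)),
      Fin.sum_univ_eq_sum_range (fun c => (if c = (a:ℕ) + i then (1:ℂ) else 0) * (if c + (b:ℕ) + 1 = k then 1 else 0))]
  have h1 : ∑ c ∈ Finset.range k, (if (a:ℕ) + c + 1 = k then (1:ℂ) else 0) * (if c = (b:ℕ) + i then 1 else 0)
      = ∑ c ∈ Finset.range k, (if c = (b:ℕ) + i then (if (a:ℕ) + ((b:ℕ)+i) + 1 = k then (1:ℂ) else 0) else 0) := by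
    refine Finset.sum_congr rfl fun c _ => ?_
    by_cases h : c = (b:ℕ) + i <;> simp [h]
  have h2 : ∑ c ∈ Finset.range k, (if c = (a:ℕ) + i then (1:ℂ) else 0) * (if c + (b:ℕ) + 1 = k then 1 else 0)
      = ∑ c ∈ Finset.range k, (if c = (a:ℕ) + i then (if ((a:ℕ)+i) + (b:ℕ) + 1 = k then (1:ℂ) else 0) else 0) := by
    refine Finset.sum_congr rfl fun c _ => ?_
    by_cases h : c = (a:ℕ) + i <;> simp [h]
  rw [h1, h2, sum_indicator, sum_indicator]
  by_cases hb : (b:ℕ) + i < k <;> by_cases ha : (a:ℕ) + i < k <;>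
      simp only [hb, ha, if_true, if_false]
  · rw [show (a:ℕ) + ((b:ℕ)+i) + 1 = (a:ℕ)+i+(b:ℕ)+1 by omega]
  · rw [if_neg (by omega)]
  · rw [if_neg (by omega)]

lemma etaEta (k : ℕ) : etaMat k * etaMat k = 1 := by
  ext a b
  simp only [etaMat, Matrix.mul_apply, Matrix.of_apply]
  rw [Fin.sum_univ_eq_sum_range (fun c => (if (a:ℕ) + c + 1 = k then (1:ℂ) else 0) * (if c + (b:ℕ) + 1 = k then 1 else 0))]
  have ha := a.isLt; have hb := b.isLt
  have h1 : ∑ c ∈ Finset.range k, (if (a:ℕ) + c + 1 = k then (1:ℂ) else 0) * (if c + (b:ℕ) + 1 = k then 1 else 0)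
      = ∑ c ∈ Finset.range k, (if c = k - 1 - (a:ℕ) then (if (k-1-(a:ℕ)) + (b:ℕ) + 1 = k then (1:ℂ) else 0) else 0) := by
    refine Finset.sum_congr rfl fun c _ => ?_
    by_cases h : c = k - 1 - (a:ℕ)
    · subst h
      rw [if_pos (show (a:ℕ) + (k-1-(a:ℕ)) + 1 = k by omega), one_mul, if_pos rfl]
    · rw [if_neg h, if_neg (by omega), zero_mul]
  rw [h1, sum_indicator, if_pos (by omega), Matrix.one_apply]
  by_cases h : a = b
  · rw [if_pos h, if_pos (by subst h; omega)]
  · rw [if_neg h, if_neg (by intro hh; exact h (Fin.ext (by omega)))]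
noncomputable def coefS (α : ℕ → ℂ) (m : ℕ) : ℂ :=
  ∑ i ∈ Finset.range (m + 1), (-1 : ℂ) ^ i * α i * α (m - i)

lemma neg_one_pow_sub_c {i m : ℕ} (h : i ≤ m) : (-1:ℂ)^(m-i) = (-1)^m * (-1)^i := by
  have h1 : (-1:ℂ)^(m-i) * (-1)^i = (-1)^m := by rw [← pow_add]; congr 1; omega
  have h2 : ((-1:ℂ)^i) * ((-1)^i) = 1 := by rw [← pow_add, ← two_mul, pow_mul]; norm_num
  calc (-1:ℂ)^(m-i) = (-1)^(m-i) * ((-1)^i * (-1)^i) := by rw [h2, mul_one]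
  _ = ((-1)^(m-i) * (-1)^i) * (-1)^i := by ring
  _ = (-1)^m * (-1)^i := by rw [h1]

lemma coefS_odd (α : ℕ → ℂ) {m : ℕ} (hm : Odd m) : coefS α m = 0 := by
  have hrefl := Finset.sum_range_reflect (fun i => (-1 : ℂ) ^ i * α i * α (m - i)) (m+1)
  have h2 : ∀ i ∈ Finset.range (m+1),
      (-1 : ℂ) ^ (m + 1 - 1 - i) * α (m + 1 - 1 - i) * α (m - (m + 1 - 1 - i))
        = -((-1 : ℂ) ^ i * α i * α (m - i)) := by
    intro i hi
    rw [Finset.mem_range] at hi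
    have hle : i ≤ m := by omega
    rw [show m + 1 - 1 - i = m - i by omega, show m - (m - i) = i by omega,
        neg_one_pow_sub_c hle, hm.neg_one_pow]
    ring
  rw [Finset.sum_congr rfl h2, Finset.sum_neg_distrib] at hrefl
  unfold coefS
  have h3 : (2:ℂ) * ∑ i ∈ Finset.range (m + 1), (-1 : ℂ) ^ i * α i * α (m - i) = 0 := by
    linear_combination - hrefl
  exact (mul_eq_zero.mp h3).resolve_left two_ne_zero

lemma coefS_even (α : ℕ → ℂ) (hα : α 0 = 1) {n : ℕ} (hn : 1 ≤ n) :
    coefS α (2*n) = 2 * α (2*n) +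
      ∑ i ∈ Finset.Ico 1 (2*n), (-1 : ℂ) ^ i * α i * α (2*n - i) := by
  unfold coefS
  rw [Finset.sum_range_succ, Finset.range_eq_Ico,
      Finset.sum_eq_sum_Ico_succ_bot (by omega : 0 < 2*n)]
  simp only [pow_zero, one_mul, Nat.sub_zero, Nat.sub_self, hα, mul_one]
  rw [Even.neg_one_pow ⟨n, by ring⟩]
  ring

lemma Mentry (k : ℕ) (w : ℕ → ℕ → ℂ) (a b : Fin k) :
    (∑ i ∈ Finset.range k, ∑ j ∈ Finset.range k, w i j • Jmat k (i + j)) a b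
      = if (b : ℕ) ≤ (a : ℕ) then
          ∑ i ∈ Finset.range ((a : ℕ) - (b : ℕ) + 1), w i ((a : ℕ) - (b : ℕ) - i)
        else 0 := by
  have ha := a.isLt
  simp only [Matrix.sum_apply, Matrix.smul_apply, Jmat, Matrix.of_apply, smul_eq_mul, mul_ite,
    mul_one, mul_zero]
  have hin : ∀ i, ∑ j ∈ Finset.range k,
      (if (a : ℕ) = (b : ℕ) + (i + j) then w i j else 0)
        = if (b : ℕ) + i ≤ (a : ℕ) then w i ((a : ℕ) - (b : ℕ) - i) else 0 := by
    intro i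
    by_cases hi : (b : ℕ) + i ≤ (a : ℕ)
    · rw [if_pos hi]
      have h1 : ∀ j ∈ Finset.range k,
          (if (a : ℕ) = (b : ℕ) + (i + j) then w i j else 0)
            = if j = (a : ℕ) - (b : ℕ) - i then w i j else 0 := by
        intro j _
        congr 1
        simp only [eq_iff_iff]
        omega
      rw [Finset.sum_congr rfl h1, sum_indicator, if_pos (by omega)]
    · rw [if_neg hi]
      refine Finset.sum_eq_zero fun j _ => if_neg (by omega)
  rw [Finset.sum_congr rfl fun i _ => hin i]
  by_cases hba : (b : ℕ) ≤ (a : ℕ)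
  · rw [if_pos hba]
    have h2 : ∀ i ∈ Finset.range k,
        (if (b : ℕ) + i ≤ (a : ℕ) then w i ((a : ℕ) - (b : ℕ) - i) else 0)
          = if i ∈ Finset.range ((a : ℕ) - (b : ℕ) + 1) then w i ((a : ℕ) - (b : ℕ) - i) else 0 := by
      intro i _
      congr 1
      simp only [Finset.mem_range, eq_iff_iff]
      omega
    rw [Finset.sum_congr rfl h2, Finset.sum_ite_mem,
        (by rw [Finset.inter_eq_right.mpr (Finset.range_subset_range.mpr (by omega))] :
          Finset.range k ∩ Finset.range ((a : ℕ) - (b : ℕ) + 1)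
            = Finset.range ((a : ℕ) - (b : ℕ) + 1))]
  · rw [if_neg hba]
    refine Finset.sum_eq_zero fun i _ => if_neg (by omega)

lemma reduction (k : ℕ) (x y : ℕ → ℂ) :
    (∑ i ∈ Finset.range k, x i • Jmat k i)ᵀ * etaMat k * (∑ i ∈ Finset.range k, y i • Jmat k i)
      = etaMat k * ∑ i ∈ Finset.range k, ∑ j ∈ Finset.range k, (x i * y j) • Jmat k (i + j) := by
  have e1 : (∑ i ∈ Finset.range k, x i • Jmat k i)ᵀ * etaMat k
      = etaMat k * ∑ i ∈ Finset.range k, x i • Jmat k i := by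
    rw [Matrix.transpose_sum, Finset.sum_mul, Finset.mul_sum]
    refine Finset.sum_congr rfl fun i _ => ?_
    rw [Matrix.transpose_smul, Matrix.smul_mul, Matrix.mul_smul, ← etaJ]
  rw [e1, Matrix.mul_assoc]
  congr 1
  rw [Finset.sum_mul]
  refine Finset.sum_congr rfl fun i _ => ?_
  rw [Finset.mul_sum]
  refine Finset.sum_congr rfl fun j _ => ?_
  rw [Matrix.smul_mul, Matrix.mul_smul, smul_smul, Jmul]

lemma eta_cancel (k : ℕ) (M : Matrix (Fin k) (Fin k) ℂ) :
    etaMat k * M = etaMat k ↔ M = 1 := by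
  constructor
  · intro h
    calc M = (etaMat k * etaMat k) * M := by rw [etaEta, one_mul]
    _ = etaMat k * (etaMat k * M) := by rw [Matrix.mul_assoc]
    _ = 1 := by rw [h, etaEta]
  · intro h; rw [h, mul_one]


/-- The matrix `C = Σ αᵢ Jᵢ` (with `α₀ = 1`) satisfies
`(Σ (-1)^i αᵢ z^i Jᵢ)ᵀ · η · (Σ αᵢ z^i Jᵢ) = η` for every `z ∈ ℂ` if and only if
`2·α_{2n} + Σ_{i+j=2n, i,j ≥ 1} (-1)^i αᵢ αⱼ = 0` for every `n` with `2 ≤ 2n ≤ k - 1`. -/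
theorem stmt_11 (k : ℕ) (hk : 1 ≤ k) (α : ℕ → ℂ) (hα : α 0 = 1) :
    (∀ z : ℂ,
      (∑ i ∈ Finset.range k, ((-1 : ℂ) ^ i * α i * z ^ i) • Jmat k i)ᵀ * etaMat k *
          (∑ i ∈ Finset.range k, (α i * z ^ i) • Jmat k i) =
        etaMat k) ↔
    (∀ n : ℕ, 1 ≤ n → 2 * n ≤ k - 1 →
      2 * α (2 * n) +
          ∑ i ∈ Finset.Ico 1 (2 * n), (-1 : ℂ) ^ i * α i * α (2 * n - i) = 0) := by
  have key : ∀ z : ℂ,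
      ((∑ i ∈ Finset.range k, ((-1:ℂ)^i * α i * z^i) • Jmat k i)ᵀ * etaMat k *
        (∑ i ∈ Finset.range k, (α i * z^i) • Jmat k i) = etaMat k)
      ↔ (∑ i ∈ Finset.range k, ∑ j ∈ Finset.range k,
          (((-1:ℂ)^i * α i * z^i) * (α j * z^j)) • Jmat k (i+j)) = 1 := by
    intro z
    rw [reduction, eta_cancel]
  have hcoef : ∀ z : ℂ, ∀ m : ℕ,
      ∑ i ∈ Finset.range (m+1), ((-1:ℂ)^i * α i * z^i) * (α (m-i) * z^(m-i))
        = coefS α m * z^m := by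
    intro z m
    unfold coefS
    rw [Finset.sum_mul]
    refine Finset.sum_congr rfl fun i hi => ?_
    rw [Finset.mem_range] at hi
    have hz : z^i * z^(m-i) = z^m := by rw [← pow_add]; congr 1; omega
    calc ((-1:ℂ)^i * α i * z^i) * (α (m-i) * z^(m-i))
        = ((-1:ℂ)^i * α i * α (m-i)) * (z^i * z^(m-i)) := by ring
    _ = (-1:ℂ)^i * α i * α (m-i) * z^m := by rw [hz]
  constructor
  · intro h n hn hnk
    have h1 := (key 1).mp (h 1)
    have h2 : (∑ i ∈ Finset.range k, ∑ j ∈ Finset.range k,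
        (((-1:ℂ)^i * α i * (1:ℂ)^i) * (α j * (1:ℂ)^j)) • Jmat k (i+j))
          (⟨2*n, by omega⟩ : Fin k) (⟨0, by omega⟩ : Fin k)
        = (1 : Matrix (Fin k) (Fin k) ℂ) ⟨2*n, by omega⟩ ⟨0, by omega⟩ := by rw [h1]
    rw [Mentry] at h2
    simp only [Nat.zero_le, if_pos, Nat.sub_zero] at h2
    rw [hcoef 1 (2*n), Matrix.one_apply_ne (by intro hh; have := Fin.mk.injEq .. ▸ hh; omega)] at h2
    rw [one_pow, mul_one] at h2
    rw [← coefS_even α hα hn, h2]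
  · intro hc z
    rw [key]
    ext a b
    rw [Mentry]
    by_cases hba : (b:ℕ) ≤ (a:ℕ)
    · rw [if_pos hba, hcoef z ((a:ℕ) - (b:ℕ))]
      by_cases hm : (a:ℕ) - (b:ℕ) = 0
      · have hab : a = b := Fin.ext (by omega)
        subst hab
        rw [Matrix.one_apply_eq, hm, pow_zero, mul_one]
        unfold coefS
        simp [hα]
      · have hC : coefS α ((a:ℕ) - (b:ℕ)) = 0 := by
          rcases Nat.even_or_odd ((a:ℕ) - (b:ℕ)) with he | ho
          · obtain ⟨n, hn⟩ := he
            have h1n : 1 ≤ n := by omega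
            have h2n : 2*n ≤ k - 1 := by have := a.isLt; omega
            rw [show (a:ℕ) - (b:ℕ) = 2*n by omega, coefS_even α hα h1n]
            exact hc n h1n h2n
          · exact coefS_odd α ho
        rw [hC, zero_mul, Matrix.one_apply_ne (by intro hh; apply hm; rw [hh]; omega)]
    · rw [if_neg hba, Matrix.one_apply_ne (by intro hh; apply hba; rw [hh])]
end

section
/- Let G be a group and b₁, b₂, b₃, … elements of G satisfying the braid relations: bᵢbⱼ = bⱼbᵢ whenever |i − j| ≥ 2 and bᵢbᵢ₊₁bᵢ = bᵢ₊₁bᵢbᵢ₊₁ for all i ≥ 1. For integers t, s with s ≥ 1 write D(t, s) := b_t · b_{t−1} · ⋯ · b_s (the descending product, with D(t, s) := 1 if t < s). Then: (1) for every even integer k ≥ 4, ( ∏_{m=0}^{k/2−3} D(k−5−m, 1+m) ) · D(k−3, 1) · D(k−1, 1) = ∏_{j=1}^{k/2} D(2j−1, 1); (2) for every odd integer k ≥ 5, ( ∏_{m=0}^{(k−7)/2} D(k−5−m, 1+m) ) · D(k−3, 1) · D(k−1, 1) = ∏_{j=1}^{(k−1)/2} D(2j, 1), where all indexed products are taken in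 increasing order of the index (and empty products equal 1). -/
def descProd {G : Type*} [Group G] (b : ℕ → G) (t s : ℕ) : G :=
  ((List.range' s (t + 1 - s)).reverse.map b).prod

section
variable {G : Type*} [Group G] (b : ℕ → G)

lemma descProd_nil {t s : ℕ} (h : t < s) : descProd b t s = 1 := by
  unfold descProd
  have : t + 1 - s = 0 := by omega
  simp [this]

lemma descProd_cons {t s : ℕ} (h : s ≤ t + 1) :
    descProd b (t + 1) s = b (t + 1) * descProd b t s := by
  unfold descProd
  have h1 : t + 1 + 1 - s = (t + 1 - s) + 1 := by omega
  have h2 : s + (t + 1 - s) = t + 1 := by omega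
  rw [h1, List.range'_1_concat, h2]
  simp

variable (hcomm : ∀ i j : ℕ, 1 ≤ i → 1 ≤ j → (i + 2 ≤ j ∨ j + 2 ≤ i) → b i * b j = b j * b i)
variable (hbraid : ∀ i : ℕ, 1 ≤ i → b i * b (i + 1) * b i = b (i + 1) * b i * b (i + 1))

include hcomm in
lemma comm_descProd : ∀ t s j : ℕ, 1 ≤ s → t + 2 ≤ j →
    b j * descProd b t s = descProd b t s * b j := by
  intro t
  induction t with
  | zero => intro s j hs _; rw [descProd_nil b (by omega)]; simp
  | succ t ih =>
    intro s j hs hj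
    by_cases hst : s ≤ t + 1
    · rw [descProd_cons b hst, ← mul_assoc, hcomm j (t+1) (by omega) (by omega) (by omega),
        mul_assoc, ih s j hs (by omega), ← mul_assoc]
    · rw [descProd_nil b (by omega)]; simp

include hcomm hbraid in
lemma slide_one : ∀ t s j : ℕ, 1 ≤ s → s ≤ j → j + 1 ≤ t →
    b j * descProd b t s = descProd b t s * b (j + 1) := by
  intro t
  induction t with
  | zero => intro s j hs hsj hjt; omega
  | succ t ih =>
    intro s j hs hsj hjt
    rw [descProd_cons b (by omega)]
    by_cases hj : j + 1 ≤ t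
    · rw [← mul_assoc, hcomm j (t+1) (by omega) (by omega) (by omega),
        mul_assoc, ih s j hs hsj hj, ← mul_assoc]
    · have hjt' : j = t := by omega
      subst hjt'
      obtain ⟨t', rfl⟩ : ∃ t'', j = t'' + 1 := ⟨j - 1, by omega⟩
      rw [descProd_cons b (show s ≤ t' + 1 by omega)]
      simp only [← mul_assoc]
      rw [hbraid (t'+1) (by omega), mul_assoc (b (t'+1+1) * b (t'+1)),
        comm_descProd b hcomm t' s (t'+1+1) hs (by omega), ← mul_assoc]

include hcomm hbraid in
lemma slide_prod : ∀ t s T : ℕ, 1 ≤ s → t + 1 ≤ T →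
    descProd b t s * descProd b T 1 = descProd b T 1 * descProd b (t+1) (s+1) := by
  intro t
  induction t with
  | zero =>
    intro s T hs hT
    rw [descProd_nil (t := 0) (s := s) b (by omega), descProd_nil (t := 1) (s := s + 1) b (by omega)]
    simp
  | succ t ih =>
    intro s T hs hT
    by_cases hst : s ≤ t + 1
    · rw [descProd_cons b hst, mul_assoc, ih s T hs (by omega), ← mul_assoc,
        slide_one b hcomm hbraid T 1 (t+1) le_rfl (by omega) (by omega), mul_assoc,
        ← descProd_cons b (show s + 1 ≤ t + 1 + 1 by omega)]
    · rw [descProd_nil (t := t + 1) (s := s) b (by omega),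
        descProd_nil (t := t + 1 + 1) (s := s + 1) b (by omega)]
      simp

include hcomm hbraid in
lemma staircase : ∀ n a T : ℕ, a + 1 ≤ T →
    ((List.range n).map (fun m => descProd b (a - m) (1 + m))).prod * descProd b T 1
      = descProd b T 1 *
        ((List.range n).map (fun m => descProd b (a - m + 1) (1 + m + 1))).prod := by
  intro n
  induction n with
  | zero => intro a T hT; simp
  | succ n ih =>
    intro a T hT
    rw [List.range_succ, List.map_append, List.map_append, List.prod_append, List.prod_append]
    simp only [List.map_cons, List.map_nil, List.prod_cons, List.prod_nil, mul_one]
    rw [mul_assoc, slide_prod b hcomm hbraid (a - n) (1 + n) T (by omega) (by omega),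
      ← mul_assoc, ih a T hT, mul_assoc]

include hcomm hbraid in
lemma main_even : ∀ n : ℕ,
    ((List.range n).map (fun m => descProd b (2*n - 1 - m) (1 + m))).prod *
        descProd b (2*n + 1) 1 * descProd b (2*n + 3) 1 =
      ((List.range (n + 2)).map (fun j => descProd b (2*j + 1) 1)).prod := by
  intro n
  induction n with
  | zero =>
    simp [List.range_succ]
  | succ n ih =>
    rw [List.range_succ_eq_map, List.map_cons, List.prod_cons, List.map_map]
    have hhead : 2*(n+1) - 1 - 0 = 2*n + 1 := by omega
    have htail : ((List.range n).map ((fun m => descProd b (2*(n+1) - 1 - m) (1 + m)) ∘ Nat.succ))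
        = (List.range n).map (fun m => descProd b (2*n - 1 - m + 1) (1 + m + 1)) := by
      apply List.map_congr_left
      intro m hm
      rw [List.mem_range] at hm
      simp only [Function.comp]
      congr 1 <;> omega
    rw [hhead, htail, ← staircase b hcomm hbraid n (2*n - 1) (2*n + 1) (by omega)]
    have h3 : 2*(n+1) + 1 = 2*n + 3 := by ring
    have h5 : 2*(n+1) + 3 = 2*n + 5 := by ring
    rw [h3, h5]
    calc ((List.range n).map (fun m => descProd b (2*n - 1 - m) (1 + m))).prod *
          descProd b (2*n + 1) 1 * descProd b (2*n + 3) 1 * descProd b (2*n + 5) 1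
        = ((List.range (n + 2)).map (fun j => descProd b (2*j + 1) 1)).prod *
          descProd b (2*n + 5) 1 := by rw [ih]
      _ = ((List.range (n + 1 + 2)).map (fun j => descProd b (2*j + 1) 1)).prod := by
          rw [List.range_succ (n := n + 2), List.map_append, List.prod_append]
          have : 2*(n+2) + 1 = 2*n + 5 := by ring
          simp [this]

include hcomm hbraid in
lemma main_odd : ∀ n : ℕ,
    ((List.range n).map (fun m => descProd b (2*n - m) (1 + m))).prod *
        descProd b (2*n + 2) 1 * descProd b (2*n + 4) 1 =
      ((List.range (n + 2)).map (fun j => descProd b (2*j + 2) 1)).prod := by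
  intro n
  induction n with
  | zero =>
    simp [List.range_succ]
  | succ n ih =>
    rw [List.range_succ_eq_map, List.map_cons, List.prod_cons, List.map_map]
    have hhead : 2*(n+1) - 0 = 2*n + 2 := by omega
    have htail : ((List.range n).map ((fun m => descProd b (2*(n+1) - m) (1 + m)) ∘ Nat.succ))
        = (List.range n).map (fun m => descProd b (2*n - m + 1) (1 + m + 1)) := by
      apply List.map_congr_left
      intro m hm
      rw [List.mem_range] at hm
      simp only [Function.comp]
      congr 1 <;> omega
    rw [hhead, htail, ← staircase b hcomm hbraid n (2*n) (2*n + 2) (by omega)]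
    have h3 : 2*(n+1) + 2 = 2*n + 4 := by ring
    have h5 : 2*(n+1) + 4 = 2*n + 6 := by ring
    rw [h3, h5]
    calc ((List.range n).map (fun m => descProd b (2*n - m) (1 + m))).prod *
          descProd b (2*n + 2) 1 * descProd b (2*n + 4) 1 * descProd b (2*n + 6) 1
        = ((List.range (n + 2)).map (fun j => descProd b (2*j + 2) 1)).prod *
          descProd b (2*n + 6) 1 := by rw [ih]
      _ = ((List.range (n + 1 + 2)).map (fun j => descProd b (2*j + 2) 1)).prod := by
          rw [List.range_succ (n := n + 2), List.map_append, List.prod_append]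
          have : 2*(n+2) + 2 = 2*n + 6 := by ring
          simp [this]

end

/-- Rewriting of the braid `β·β'` of the paper into normal form: for elements
`b₁, b₂, …` of a group satisfying the braid relations,
`(∏_{m=0}^{k/2-3} D(k-5-m, 1+m)) · D(k-3,1) · D(k-1,1) = ∏_{j=1}^{k/2} D(2j-1, 1)` for
even `k ≥ 4`, and
`(∏_{m=0}^{(k-7)/2} D(k-5-m, 1+m)) · D(k-3,1) · D(k-1,1) = ∏_{j=1}^{(k-1)/2} D(2j, 1)`
for odd `k ≥ 5`. -/
theorem stmt_13 {G : Type*} [Group G] (b : ℕ → G)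
    (hcomm : ∀ i j : ℕ, 1 ≤ i → 1 ≤ j → (i + 2 ≤ j ∨ j + 2 ≤ i) → b i * b j = b j * b i)
    (hbraid : ∀ i : ℕ, 1 ≤ i → b i * b (i + 1) * b i = b (i + 1) * b i * b (i + 1)) :
    (∀ k : ℕ, 4 ≤ k → k % 2 = 0 →
      ((List.range (k / 2 - 2)).map (fun m => descProd b (k - 5 - m) (1 + m))).prod *
          descProd b (k - 3) 1 * descProd b (k - 1) 1 =
        ((List.range (k / 2)).map (fun j => descProd b (2 * j + 1) 1)).prod) ∧
    (∀ k : ℕ, 5 ≤ k → k % 2 = 1 →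
      ((List.range ((k - 5) / 2)).map (fun m => descProd b (k - 5 - m) (1 + m))).prod *
          descProd b (k - 3) 1 * descProd b (k - 1) 1 =
        ((List.range ((k - 1) / 2)).map (fun j => descProd b (2 * j + 2) 1)).prod) := by
  constructor
  · intro k hk hk2
    obtain ⟨n, rfl⟩ : ∃ n, k = 2 * n + 4 := ⟨k / 2 - 2, by omega⟩
    have h1 : (2 * n + 4) / 2 - 2 = n := by omega
    have h2 : (2 * n + 4) / 2 = n + 2 := by omega
    have h3 : 2 * n + 4 - 3 = 2 * n + 1 := by omega
    have h4 : 2 * n + 4 - 1 = 2 * n + 3 := by omega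
    have h5 : ∀ m : ℕ, 2 * n + 4 - 5 - m = 2 * n - 1 - m := fun m => by omega
    simp only [h1, h2, h3, h4, h5]
    exact main_even b hcomm hbraid n
  · intro k hk hk2
    obtain ⟨n, rfl⟩ : ∃ n, k = 2 * n + 5 := ⟨(k - 5) / 2, by omega⟩
    have h1 : (2 * n + 5 - 5) / 2 = n := by omega
    have h2 : (2 * n + 5 - 1) / 2 = n + 2 := by omega
    have h6 : (2 * n + 4) / 2 = n + 2 := by omega
    have h3 : 2 * n + 5 - 3 = 2 * n + 2 := by omega
    have h4 : 2 * n + 5 - 1 = 2 * n + 4 := by omega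
    have h5 : ∀ m : ℕ, 2 * n + 5 - 5 - m = 2 * n - m := fun m => by omega
    simp only [h1, h2, h3, h4, h5, h6]
    exact main_odd b hcomm hbraid n
end

section
/- Let k ≥ 2 and let B_k be the braid group on k strands, i.e. the group presented by generators σ₁, …, σ_{k−1} subject to the relations σᵢσⱼ = σⱼσᵢ for |i − j| ≥ 2 and σᵢσᵢ₊₁σᵢ = σᵢ₊₁σᵢσᵢ₊₁. Define β ∈ B_k by β := ∏_{j=1}^{k/2} (σ_{2j−1}·σ_{2j−2}·⋯·σ₁) if k is even, and β := ∏_{j=1}^{(k−1)/2} (σ_{2j}·σ_{2j−1}·⋯·σ₁) if k is odd (outer products in increasing j, each inner product with descending indices). If k is even set ω₁ := the product of the σ_i over all odd i with 1 ≤ i ≤ k−1 and ω₂ := the product of the σ_i over all even i with 2 ≤ i ≤ k−2; if k is odd set ω₁ := the product of the σ_i over all even i with 2 ≤ i ≤ k−1 and ω₂ := the product of the σ_i over all odd i with 1 ≤ i ≤ k−2 (in each case the factors pairwise commute, so the order is immaterial). Then β can be written as an alternating product starting with ω₁ — that is, β = (ω₁ω₂)^m or β = (ω₁ω₂)^m·ω₁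 for some integer m ≥ 0 — if and only if k = 2 or k = 3. -/
/-- The braid relations, as a set of relators in the free group on `m` generators
`σ₁, …, σ_m` (indexed by `Fin m`): `σᵢσⱼ = σⱼσᵢ` for `|i - j| ≥ 2` and
`σᵢσᵢ₊₁σᵢ = σᵢ₊₁σᵢσᵢ₊₁`. -/
def braidRels (m : ℕ) : Set (FreeGroup (Fin m)) :=
  {r | ∃ i j : Fin m, ((i : ℕ) + 2 ≤ (j : ℕ) ∨ (j : ℕ) + 2 ≤ (i : ℕ)) ∧
        r = FreeGroup.of i * FreeGroup.of j * (FreeGroup.of j * FreeGroup.of i)⁻¹} ∪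
  {r | ∃ i j : Fin m, (j : ℕ) = (i : ℕ) + 1 ∧
        r = FreeGroup.of i * FreeGroup.of j * FreeGroup.of i *
            (FreeGroup.of j * FreeGroup.of i * FreeGroup.of j)⁻¹}

/-- The generator `σ_i` (for `1 ≤ i ≤ k - 1`) of the braid group `B_k` on `k` strands,
presented with `k - 1` generators and the braid relations. -/
def sigmaGen (k i : ℕ) : PresentedGroup (braidRels (k - 1)) :=
  if h : 1 ≤ i ∧ i ≤ k - 1 then PresentedGroup.of ⟨i - 1, by omega⟩ else 1

/-- The descending product `σ_t · σ_{t-1} · ⋯ · σ_s` in `B_k`. -/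
def descSigma (k t s : ℕ) : PresentedGroup (braidRels (k - 1)) :=
  ((List.range' s (t + 1 - s)).reverse.map (sigmaGen k)).prod

/-- The braid `β ∈ B_k` of the paper:
`β = ∏_{j=1}^{k/2} (σ_{2j-1} σ_{2j-2} ⋯ σ₁)` for `k` even, and
`β = ∏_{j=1}^{(k-1)/2} (σ_{2j} σ_{2j-1} ⋯ σ₁)` for `k` odd. -/
def betaBraid (k : ℕ) : PresentedGroup (braidRels (k - 1)) :=
  if k % 2 = 0 then ((List.range (k / 2)).map (fun j => descSigma k (2 * j + 1) 1)).prod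
  else ((List.range (k / 2)).map (fun j => descSigma k (2 * j + 2) 1)).prod

/-- `ω₁ ∈ B_k`: the product of the `σ_i` over all odd `i` with `1 ≤ i ≤ k - 1` for `k`
even, and over all even `i` with `2 ≤ i ≤ k - 1` for `k` odd. -/
def omegaOne (k : ℕ) : PresentedGroup (braidRels (k - 1)) :=
  if k % 2 = 0 then ((List.range (k / 2)).map (fun m => sigmaGen k (2 * m + 1))).prod
  else ((List.range (k / 2)).map (fun m => sigmaGen k (2 * m + 2))).prod

/-- `ω₂ ∈ B_k`: the product of the `σ_i` over all even `i` with `2 ≤ i ≤ k - 2` for `k`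
even, and over all odd `i` with `1 ≤ i ≤ k - 2` for `k` odd. -/
def omegaTwo (k : ℕ) : PresentedGroup (braidRels (k - 1)) :=
  if k % 2 = 0 then ((List.range (k / 2 - 1)).map (fun m => sigmaGen k (2 * m + 2))).prod
  else ((List.range (k / 2)).map (fun m => sigmaGen k (2 * m + 1))).prod

/-!
Two homomorphisms out of the braid group detect the obstruction: the exponent sum
`σᵢ ↦ 1 ∈ ℤ` and the permutation action `σᵢ ↦ (i i+1)` on strands.

For `k = 2n` the exponent sums of `β, ω₁, ω₂` are `n², n, n - 1`, and `n²` is congruent to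
neither `0` nor `n` modulo `2n - 1` once `n ≥ 2`.

For `k = 2n + 1` they are `n(n + 1), n, n`, which leaves only `(ω₁ω₂)^m` with `2m = n + 1`
and `(ω₁ω₂)^m ω₁` with `2m = n`. Now follow the last strand: `β` sends `2n + 1` to `2n`, while
`ω₁ω₂` sends `2n + 1 ↦ 2n` and `2e ↦ 2e - 2`, so the two candidates send it to `2(n + 1 - m)`
and `2(n - m)`; either equals `2n` only if `n ≤ 1`.
-/

open Equiv Multiplicative

def IsAlternatingProduct {G : Type*} [Monoid G] (x a b : G) : Prop :=
  ∃ m : ℕ, x = (a * b) ^ m ∨ x = (a * b) ^ m * a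

theorem swap_succ_mul_swap_succ_comm {i j : ℕ} (h : i + 2 ≤ j ∨ j + 2 ≤ i) :
    swap i (i + 1) * swap j (j + 1) = swap j (j + 1) * swap i (i + 1) :=
  (Perm.disjoint_swap_swap (by simp; omega)).commute.eq

theorem swap_succ_braid (i : ℕ) :
    swap i (i + 1) * swap (i + 1) (i + 2) * swap i (i + 1) =
      swap (i + 1) (i + 2) * swap i (i + 1) * swap (i + 1) (i + 2) := by
  ext x
  simp only [Perm.mul_apply, swap_apply_def]
  split_ifs <;> omega

theorem sq_ne_mul_two_mul_sub_one_add {n m r : ℤ} (hn : 2 ≤ n) (hr : r = 0 ∨ r = n) :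
    n ^ 2 ≠ m * (2 * n - 1) + r := by
  intro h
  have hdvd : 2 * n - 1 ∣ 1 := by
    rcases hr with hr | hr <;> rw [hr] at h
    · exact ⟨4 * m - 2 * n - 1, by linear_combination 4 * h⟩
    · exact ⟨2 * n - 1 - 4 * m, by linear_combination -4 * h⟩
  have := Int.le_of_dvd one_pos hdvd
  omega

theorem Equiv.Perm.pow_apply_of_apply_succ {α : Type*} (f : Perm α) (g : ℕ → α) {n : ℕ}
    (hf : ∀ e, 1 ≤ e → e < n → f (g (e + 1)) = g e) {i e : ℕ} (hi : i < e) (he : e ≤ n) :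
    (f ^ i) (g e) = g (e - i) := by
  induction i with
  | zero => rfl
  | succ i ih =>
    rw [pow_succ', Perm.mul_apply, ih (by omega), show e - i = e - (i + 1) + 1 by omega,
      hf _ (by omega) (by omega)]

def braidPerm (m : ℕ) : PresentedGroup (braidRels m) →* Perm ℕ :=
  PresentedGroup.toGroup (f := fun i : Fin m => swap ((i : ℕ) + 1) ((i : ℕ) + 2)) <| by
    rintro r (⟨i, j, hij, rfl⟩ | ⟨i, j, hij, rfl⟩) <;>
      simp only [map_mul, map_inv, FreeGroup.lift_apply_of, mul_inv_eq_one]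
    · exact swap_succ_mul_swap_succ_comm (by omega)
    · rw [hij]
      exact swap_succ_braid _

def exponentSum (m : ℕ) : PresentedGroup (braidRels m) →* Multiplicative ℤ :=
  PresentedGroup.toGroup (f := fun _ : Fin m => ofAdd (1 : ℤ)) <| by
    rintro r (⟨i, j, -, rfl⟩ | ⟨i, j, -, rfl⟩) <;> simp

section
variable {k : ℕ}

theorem braidPerm_sigmaGen {i : ℕ} (h₁ : 1 ≤ i) (h₂ : i ≤ k - 1) :
    braidPerm (k - 1) (sigmaGen k i) = swap i (i + 1) := by
  rw [sigmaGen, dif_pos ⟨h₁, h₂⟩, braidPerm, PresentedGroup.toGroup.of]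
  congr 1 <;> simp <;> omega

theorem braidPerm_sigmaGen_apply_of_ne {i x : ℕ} (h₁ : x ≠ i) (h₂ : x ≠ i + 1) :
    braidPerm (k - 1) (sigmaGen k i) x = x := by
  by_cases hi : 1 ≤ i ∧ i ≤ k - 1
  · rw [braidPerm_sigmaGen hi.1 hi.2, swap_apply_of_ne_of_ne h₁ h₂]
  · simp [sigmaGen, hi]

theorem exponentSum_sigmaGen {i : ℕ} (h₁ : 1 ≤ i) (h₂ : i ≤ k - 1) :
    exponentSum (k - 1) (sigmaGen k i) = ofAdd 1 := by
  rw [sigmaGen, dif_pos ⟨h₁, h₂⟩, exponentSum, PresentedGroup.toGroup.of]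

theorem descSigma_zero : descSigma k 0 1 = 1 := rfl

theorem descSigma_succ (t : ℕ) :
    descSigma k (t + 1) 1 = sigmaGen k (t + 1) * descSigma k t 1 := by
  simp [descSigma, List.range'_concat, add_comm 1 t]

theorem exponentSum_descSigma {t : ℕ} (ht : t ≤ k - 1) :
    exponentSum (k - 1) (descSigma k t 1) = ofAdd (t : ℤ) := by
  induction t with
  | zero => rfl
  | succ t ih =>
    rw [descSigma_succ, map_mul, exponentSum_sigmaGen (by omega) ht, ih (by omega), ← ofAdd_add]
    push_cast
    rw [add_comm]

theorem braidPerm_descSigma_apply_of_lt {t x : ℕ} (h : t + 1 < x) :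
    braidPerm (k - 1) (descSigma k t 1) x = x := by
  induction t with
  | zero => rw [descSigma_zero, map_one, Perm.one_apply]
  | succ t ih =>
    rw [descSigma_succ, map_mul, Perm.mul_apply, ih (by omega),
      braidPerm_sigmaGen_apply_of_ne (by omega) (by omega)]

theorem braidPerm_descSigma_apply_succ {t : ℕ} (h₁ : 1 ≤ t) (h₂ : t ≤ k - 1) :
    braidPerm (k - 1) (descSigma k t 1) (t + 1) = t := by
  obtain ⟨s, rfl⟩ : ∃ s, t = s + 1 := ⟨t - 1, by omega⟩
  rw [descSigma_succ, map_mul, Perm.mul_apply, braidPerm_descSigma_apply_of_lt (by omega),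
    braidPerm_sigmaGen h₁ h₂, swap_apply_right]

def sigmaStride (k a n : ℕ) : PresentedGroup (braidRels (k - 1)) :=
  ((List.range n).map fun m => sigmaGen k (2 * m + a)).prod

theorem sigmaStride_zero (a : ℕ) : sigmaStride k a 0 = 1 := rfl

theorem sigmaStride_succ (a n : ℕ) :
    sigmaStride k a (n + 1) = sigmaStride k a n * sigmaGen k (2 * n + a) := by
  simp [sigmaStride, List.range_succ]

theorem exponentSum_sigmaStride {a n : ℕ} (ha : 1 ≤ a) (h : 2 * n + a ≤ k + 1) :
    exponentSum (k - 1) (sigmaStride k a n) = ofAdd (n : ℤ) := by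
  induction n with
  | zero => rfl
  | succ n ih =>
    rw [sigmaStride_succ, map_mul, ih (by omega), exponentSum_sigmaGen (by omega) (by omega),
      ← ofAdd_add]
    push_cast
    rfl

theorem braidPerm_sigmaStride_apply_of_le {a n x : ℕ} (h : 2 * n + a ≤ x) :
    braidPerm (k - 1) (sigmaStride k a n) x = x := by
  induction n with
  | zero => rw [sigmaStride_zero, map_one, Perm.one_apply]
  | succ n ih =>
    rw [sigmaStride_succ, map_mul, Perm.mul_apply,
      braidPerm_sigmaGen_apply_of_ne (by omega) (by omega), ih (by omega)]

theorem braidPerm_sigmaStride_apply {a n j : ℕ} (ha : 1 ≤ a) (h : 2 * n + a ≤ k + 1)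
    (hj : j < n) : braidPerm (k - 1) (sigmaStride k a n) (2 * j + a + 1) = 2 * j + a := by
  induction n with
  | zero => omega
  | succ n ih =>
    rw [sigmaStride_succ, map_mul, Perm.mul_apply]
    obtain hj | rfl := Nat.lt_succ_iff_lt_or_eq.mp hj
    · rw [braidPerm_sigmaGen_apply_of_ne (by omega) (by omega), ih (by omega) hj]
    · rw [braidPerm_sigmaGen (by omega) (by omega), swap_apply_right,
        braidPerm_sigmaStride_apply_of_le le_rfl]

def staircase_s14 (k a n : ℕ) : PresentedGroup (braidRels (k - 1)) :=
  ((List.range n).map fun j => descSigma k (2 * j + a) 1).prod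

theorem staircase_zero (a : ℕ) : staircase_s14 k a 0 = 1 := rfl

theorem staircase_succ (a n : ℕ) :
    staircase_s14 k a (n + 1) = staircase_s14 k a n * descSigma k (2 * n + a) 1 := by
  simp [staircase_s14, List.range_succ]

theorem exponentSum_staircase {a n : ℕ} (h : 2 * n + a ≤ k + 1) :
    exponentSum (k - 1) (staircase_s14 k a n) = ofAdd ((n : ℤ) * (n + a - 1)) := by
  induction n with
  | zero => simp [staircase_zero]
  | succ n ih =>
    rw [staircase_succ, map_mul, ih (by omega), exponentSum_descSigma (by omega), ← ofAdd_add]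
    push_cast
    ring_nf

theorem braidPerm_staircase_apply_of_le {a n x : ℕ} (h : 2 * n + a ≤ x) :
    braidPerm (k - 1) (staircase_s14 k a n) x = x := by
  induction n with
  | zero => rw [staircase_zero, map_one, Perm.one_apply]
  | succ n ih =>
    rw [staircase_succ, map_mul, Perm.mul_apply, braidPerm_descSigma_apply_of_lt (by omega),
      ih (by omega)]

theorem braidPerm_staircase_apply_top {a n : ℕ} (ha : 1 ≤ a) (hn : 1 ≤ n)
    (h : 2 * n + a ≤ k + 1) :
    braidPerm (k - 1) (staircase_s14 k a n) (2 * n + a - 1) = 2 * n + a - 2 := by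
  obtain ⟨n, rfl⟩ : ∃ n', n = n' + 1 := ⟨n - 1, by omega⟩
  rw [staircase_succ, map_mul, Perm.mul_apply, show 2 * (n + 1) + a - 1 = 2 * n + a + 1 by omega,
    braidPerm_descSigma_apply_succ (by omega) (by omega), braidPerm_staircase_apply_of_le le_rfl]
  omega

end

section
variable {n : ℕ}

theorem betaBraid_two_mul : betaBraid (2 * n) = staircase_s14 (2 * n) 1 n := by
  rw [betaBraid, if_pos (by omega), show 2 * n / 2 = n by omega]
  rfl

theorem omegaOne_two_mul : omegaOne (2 * n) = sigmaStride (2 * n) 1 n := by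
  rw [omegaOne, if_pos (by omega), show 2 * n / 2 = n by omega]
  rfl

theorem omegaTwo_two_mul : omegaTwo (2 * n) = sigmaStride (2 * n) 2 (n - 1) := by
  rw [omegaTwo, if_pos (by omega), show 2 * n / 2 = n by omega]
  rfl

theorem betaBraid_two_mul_add_one : betaBraid (2 * n + 1) = staircase_s14 (2 * n + 1) 2 n := by
  rw [betaBraid, if_neg (by omega), show (2 * n + 1) / 2 = n by omega]
  rfl

theorem omegaOne_two_mul_add_one : omegaOne (2 * n + 1) = sigmaStride (2 * n + 1) 2 n := by
  rw [omegaOne, if_neg (by omega), show (2 * n + 1) / 2 = n by omega]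
  rfl

theorem omegaTwo_two_mul_add_one : omegaTwo (2 * n + 1) = sigmaStride (2 * n + 1) 1 n := by
  rw [omegaTwo, if_neg (by omega), show (2 * n + 1) / 2 = n by omega]
  rfl

theorem not_isAlternatingProduct_two_mul (hn : 2 ≤ n) :
    ¬ IsAlternatingProduct (betaBraid (2 * n)) (omegaOne (2 * n)) (omegaTwo (2 * n)) := by
  have hβ : exponentSum (2 * n - 1) (betaBraid (2 * n)) = ofAdd ((n : ℤ) ^ 2) := by
    rw [betaBraid_two_mul, exponentSum_staircase (by omega)]
    ring_nf
  have hω₁ : exponentSum (2 * n - 1) (omegaOne (2 * n)) = ofAdd (n : ℤ) := by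
    rw [omegaOne_two_mul, exponentSum_sigmaStride le_rfl (by omega)]
  have hω₂ : exponentSum (2 * n - 1) (omegaTwo (2 * n)) = ofAdd ((n : ℤ) - 1) := by
    rw [omegaTwo_two_mul, exponentSum_sigmaStride (by omega) (by omega)]
    push_cast [show 1 ≤ n by omega]
    rfl
  rintro ⟨m, h | h⟩ <;> have hsum := congrArg (toAdd ∘ exponentSum (2 * n - 1)) h <;>
    simp only [Function.comp_apply, map_mul, map_pow, toAdd_mul, toAdd_pow, hβ, hω₁, hω₂,
      toAdd_ofAdd, nsmul_eq_mul] at hsum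
  · exact sq_ne_mul_two_mul_sub_one_add (n := n) (m := m) (by omega) (.inl rfl)
      (by linear_combination hsum)
  · exact sq_ne_mul_two_mul_sub_one_add (n := n) (m := m) (by omega) (.inr rfl)
      (by linear_combination hsum)

theorem braidPerm_betaBraid_two_mul_add_one_apply (hn : 1 ≤ n) :
    braidPerm (2 * n + 1 - 1) (betaBraid (2 * n + 1)) (2 * n + 1) = 2 * n := by
  have := braidPerm_staircase_apply_top (k := 2 * n + 1) (a := 2) (by omega) hn le_rfl
  rwa [show 2 * n + 2 - 1 = 2 * n + 1 by omega, show 2 * n + 2 - 2 = 2 * n by omega,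
    ← betaBraid_two_mul_add_one] at this

theorem braidPerm_omegaOne_two_mul_add_one_apply (hn : 1 ≤ n) :
    braidPerm (2 * n + 1 - 1) (omegaOne (2 * n + 1)) (2 * n + 1) = 2 * n := by
  rw [omegaOne_two_mul_add_one, show 2 * n + 1 = 2 * (n - 1) + 2 + 1 by omega,
    braidPerm_sigmaStride_apply (by omega) (by omega) (by omega)]
  omega

theorem braidPerm_omegaTwo_two_mul_add_one_apply :
    braidPerm (2 * n + 1 - 1) (omegaTwo (2 * n + 1)) (2 * n + 1) = 2 * n + 1 := by
  rw [omegaTwo_two_mul_add_one, braidPerm_sigmaStride_apply_of_le le_rfl]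

theorem braidPerm_omegaOne_mul_omegaTwo_apply_two_mul {e : ℕ} (h₁ : 1 ≤ e) (h₂ : e < n) :
    braidPerm (2 * n + 1 - 1) (omegaOne (2 * n + 1) * omegaTwo (2 * n + 1)) (2 * (e + 1)) =
      2 * e := by
  rw [map_mul (braidPerm _), Perm.mul_apply, omegaTwo_two_mul_add_one,
    show 2 * (e + 1) = 2 * e + 1 + 1 by omega, braidPerm_sigmaStride_apply le_rfl (by omega) h₂,
    omegaOne_two_mul_add_one, show 2 * e + 1 = 2 * (e - 1) + 2 + 1 by omega,
    braidPerm_sigmaStride_apply (by omega) (by omega) (by omega)]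
  omega

theorem braidPerm_omegaOne_mul_omegaTwo_pow_apply {i : ℕ} (hi : i < n) :
    braidPerm (2 * n + 1 - 1) ((omegaOne (2 * n + 1) * omegaTwo (2 * n + 1)) ^ i) (2 * n) =
      2 * (n - i) := by
  rw [map_pow]
  exact Perm.pow_apply_of_apply_succ _ (2 * ·)
    (fun _ h₁ h₂ => braidPerm_omegaOne_mul_omegaTwo_apply_two_mul h₁ h₂) hi le_rfl

theorem not_isAlternatingProduct_two_mul_add_one (hn : 2 ≤ n) :
    ¬ IsAlternatingProduct (betaBraid (2 * n + 1)) (omegaOne (2 * n + 1))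
      (omegaTwo (2 * n + 1)) := by
  have hβ : exponentSum (2 * n + 1 - 1) (betaBraid (2 * n + 1)) = ofAdd ((n : ℤ) * (n + 1)) := by
    rw [betaBraid_two_mul_add_one, exponentSum_staircase (by omega)]
    ring_nf
  have hω₁ : exponentSum (2 * n + 1 - 1) (omegaOne (2 * n + 1)) = ofAdd (n : ℤ) := by
    rw [omegaOne_two_mul_add_one, exponentSum_sigmaStride (by omega) (by omega)]
  have hω₂ : exponentSum (2 * n + 1 - 1) (omegaTwo (2 * n + 1)) = ofAdd (n : ℤ) := by
    rw [omegaTwo_two_mul_add_one, exponentSum_sigmaStride le_rfl (by omega)]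
  rintro ⟨m, h | h⟩ <;> have hsum := congrArg (toAdd ∘ exponentSum (2 * n + 1 - 1)) h <;>
    have hperm := congrArg (fun g => braidPerm (2 * n + 1 - 1) g (2 * n + 1)) h <;>
    simp only [Function.comp_apply, map_mul, map_pow, toAdd_mul, toAdd_pow, hβ, hω₁, hω₂,
      toAdd_ofAdd, nsmul_eq_mul] at hsum <;>
    rw [braidPerm_betaBraid_two_mul_add_one_apply (by omega)] at hperm
  · have hm : (n : ℤ) * (n + 1 - 2 * m) = 0 := by linear_combination hsum
    replace hm := (mul_eq_zero.mp hm).resolve_left (by positivity)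
    rw [show m = m - 1 + 1 by omega, pow_succ, map_mul (braidPerm _), Perm.mul_apply,
      map_mul (braidPerm _), Perm.mul_apply, braidPerm_omegaTwo_two_mul_add_one_apply,
      braidPerm_omegaOne_two_mul_add_one_apply (by omega),
      braidPerm_omegaOne_mul_omegaTwo_pow_apply (by omega)] at hperm
    omega
  · have hm : (n : ℤ) * (n - 2 * m) = 0 := by linear_combination hsum
    replace hm := (mul_eq_zero.mp hm).resolve_left (by positivity)
    rw [map_mul (braidPerm _), Perm.mul_apply, braidPerm_omegaOne_two_mul_add_one_apply (by omega),
      braidPerm_omegaOne_mul_omegaTwo_pow_apply (by omega)] at hperm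
    omega

end

/-- The braid `β` taking the small quantum cohomology monodromy data of `ℙ^{k-1}` to the
Beilinson form can be written as an alternating product `ω₁ω₂ω₁ω₂⋯` starting with `ω₁`
if and only if `k = 2` or `k = 3`. -/
theorem stmt_14 (k : ℕ) (hk : 2 ≤ k) :
    (∃ m : ℕ, betaBraid k = (omegaOne k * omegaTwo k) ^ m ∨
        betaBraid k = (omegaOne k * omegaTwo k) ^ m * omegaOne k) ↔
      (k = 2 ∨ k = 3) := by
  refine ⟨fun h => ?_, ?_⟩
  · by_contra hk'
    obtain ⟨n, rfl | rfl⟩ : ∃ n, k = 2 * n ∨ k = 2 * n + 1 := ⟨k / 2, by omega⟩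
    · exact not_isAlternatingProduct_two_mul (by omega) h
    · exact not_isAlternatingProduct_two_mul_add_one (by omega) h
  · rintro (rfl | rfl)
    · exact ⟨0, .inr (by simp [betaBraid, omegaOne, omegaTwo, descSigma])⟩
    · exact ⟨1, .inl (by simp [betaBraid, omegaOne, omegaTwo, descSigma, List.range'_succ])⟩
end

section
/- Let k ≥ 2, let G be a group, and let b₁, …, b_{k−1} ∈ G satisfy the braid relations: bᵢbⱼ = bⱼbᵢ for |i − j| ≥ 2 and bᵢbᵢ₊₁bᵢ = bᵢ₊₁bᵢbᵢ₊₁. Let P_odd be the product of the b_i over all odd i with 1 ≤ i ≤ k−1 and P_even the product of the b_i over all even i with 2 ≤ i ≤ k−1 (in each product the factors pairwise commute). Then (P_odd · P_even)^k = (P_even · P_odd)^k = (b₁ · b₂ · ⋯ · b_{k−1})^k. -/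
namespace Stmt15Aux

variable {G : Type*} [Group G]

/-- ascending product `b a * b (a+1) * ⋯ * b (a+m-1)` -/
def Sw (b : ℕ → G) (a : ℕ) : ℕ → G
  | 0 => 1
  | m+1 => Sw b a m * b (a+m)

/-- descending product `b (a+m-1) * ⋯ * b a` -/
def Tw (b : ℕ → G) (a : ℕ) : ℕ → G
  | 0 => 1
  | m+1 => b (a+m) * Tw b a m

/-- step-two product `b a * b (a+2) * ⋯ * b (a+2(m-1))` -/
def Ew (b : ℕ → G) (a : ℕ) : ℕ → G
  | 0 => 1
  | m+1 => Ew b a m * b (a+2*m)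

/-- the half twist on `s` strands with generators `b a, …, b (a+s-2)` -/
def Dw (b : ℕ → G) : ℕ → ℕ → G
  | _, 0 => 1
  | a, s+1 => Tw b a s * Dw b (a+1) s

def Hc (k : ℕ) (b : ℕ → G) : Prop :=
  ∀ i j : ℕ, 1 ≤ i → i ≤ k - 1 → 1 ≤ j → j ≤ k - 1 → (i + 2 ≤ j ∨ j + 2 ≤ i) →
      b i * b j = b j * b i

def Hb (k : ℕ) (b : ℕ → G) : Prop :=
  ∀ i : ℕ, 1 ≤ i → i + 1 ≤ k - 1 →
      b i * b (i + 1) * b i = b (i + 1) * b i * b (i + 1)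

variable (b : ℕ → G)

lemma Sw_cons (a m : ℕ) : Sw b a (m+1) = b a * Sw b (a+1) m := by
  induction m with
  | zero => simp [Sw]
  | succ m ih =>
      have e : a + (m+1) = (a+1) + m := by omega
      rw [show Sw b a (m+2) = Sw b a (m+1) * b (a+(m+1)) from rfl, ih, e,
        mul_assoc, ← show Sw b (a+1) (m+1) = Sw b (a+1) m * b ((a+1)+m) from rfl]

lemma Tw_cons (a m : ℕ) : Tw b a (m+1) = Tw b (a+1) m * b a := by
  induction m with
  | zero => simp [Tw]
  | succ m ih =>
      have e : a + (m+1) = (a+1) + m := by omega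
      rw [show Tw b a (m+2) = b (a+(m+1)) * Tw b a (m+1) from rfl, ih, e,
        ← mul_assoc, ← show Tw b (a+1) (m+1) = b ((a+1)+m) * Tw b (a+1) m from rfl]

lemma Ew_cons (a m : ℕ) : Ew b a (m+1) = b a * Ew b (a+2) m := by
  induction m with
  | zero => simp [Ew]
  | succ m ih =>
      have e : a + 2*(m+1) = (a+2) + 2*m := by omega
      rw [show Ew b a (m+2) = Ew b a (m+1) * b (a+2*(m+1)) from rfl, ih, e,
        mul_assoc, ← show Ew b (a+2) (m+1) = Ew b (a+2) m * b ((a+2)+2*m) from rfl]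


variable {b} {k : ℕ}


lemma bb (hcomm : Hc k b) (i j : ℕ) (h1 : 1 ≤ i) (h2 : i + 2 ≤ j) (h3 : j + 1 ≤ k) :
    b i * b j = b j * b i :=
  hcomm i j h1 (by omega) (by omega) (by omega) (Or.inl h2)

lemma br (hbraid : Hb k b) (i : ℕ) (h1 : 1 ≤ i) (h2 : i + 2 ≤ k) :
    b i * b (i+1) * b i = b (i+1) * b i * b (i+1) :=
  hbraid i h1 (by omega)

lemma Scomm_lo (hcomm : Hc k b) (i a m : ℕ) (h1 : 1 ≤ i) (h2 : i + 2 ≤ a) (h3 : a + m ≤ k) :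
    b i * Sw b a m = Sw b a m * b i := by
  induction m with
  | zero => simp [Sw]
  | succ m ih =>
      rw [show Sw b a (m+1) = Sw b a m * b (a+m) from rfl, ← mul_assoc,
        ih (by omega), mul_assoc, bb hcomm i (a+m) h1 (by omega) (by omega), ← mul_assoc]

lemma Scomm_hi (hcomm : Hc k b) (a m j : ℕ) (h1 : 1 ≤ a) (h2 : a + m + 1 ≤ j) (h3 : j + 1 ≤ k) :
    Sw b a m * b j = b j * Sw b a m := by
  induction m with
  | zero => simp [Sw]
  | succ m ih =>
      rw [show Sw b a (m+1) = Sw b a m * b (a+m) from rfl, mul_assoc,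
        (bb hcomm (a+m) j (by omega) (by omega) h3), ← mul_assoc, ih (by omega), mul_assoc]

lemma Tcomm_lo (hcomm : Hc k b) (i a m : ℕ) (h1 : 1 ≤ i) (h2 : i + 2 ≤ a) (h3 : a + m ≤ k) :
    b i * Tw b a m = Tw b a m * b i := by
  induction m with
  | zero => simp [Tw]
  | succ m ih =>
      rw [show Tw b a (m+1) = b (a+m) * Tw b a m from rfl, ← mul_assoc,
        bb hcomm i (a+m) h1 (by omega) (by omega), mul_assoc, ih (by omega), ← mul_assoc]

lemma Tcomm_hi (hcomm : Hc k b) (a m j : ℕ) (h1 : 1 ≤ a) (h2 : a + m + 1 ≤ j) (h3 : j + 1 ≤ k) :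
    Tw b a m * b j = b j * Tw b a m := by
  induction m with
  | zero => simp [Tw]
  | succ m ih =>
      rw [show Tw b a (m+1) = b (a+m) * Tw b a m from rfl, mul_assoc, ih (by omega),
        ← mul_assoc, bb hcomm (a+m) j (by omega) (by omega) h3, mul_assoc]

lemma Ecomm_lo (hcomm : Hc k b) (i c r : ℕ) (h1 : 1 ≤ i) (h2 : i + 2 ≤ c)
    (h3 : c + 2*r ≤ k + 1) :
    b i * Ew b c r = Ew b c r * b i := by
  induction r with
  | zero => simp [Ew]
  | succ r ih =>
      rw [show Ew b c (r+1) = Ew b c r * b (c+2*r) from rfl, ← mul_assoc,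
        ih (by omega), mul_assoc, bb hcomm i (c+2*r) h1 (by omega) (by omega), ← mul_assoc]

lemma SEcomm (hcomm : Hc k b) (a m c r : ℕ) (h1 : 1 ≤ a) (h2 : a + m + 1 ≤ c)
    (h3 : c + 2*r ≤ k + 1) :
    Sw b a m * Ew b c r = Ew b c r * Sw b a m := by
  induction m with
  | zero => simp [Sw]
  | succ m ih =>
      rw [show Sw b a (m+1) = Sw b a m * b (a+m) from rfl, mul_assoc,
        Ecomm_lo hcomm (a+m) c r (by omega) (by omega) h3, ← mul_assoc, ih (by omega), mul_assoc]

lemma Dcomm_lo (hcomm : Hc k b) (i : ℕ) : ∀ a s : ℕ, 1 ≤ i → i + 2 ≤ a → a + s ≤ k + 1 →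
    b i * Dw b a s = Dw b a s * b i := by
  intro a s
  induction s generalizing a with
  | zero => intro _ _ _; simp [Dw]
  | succ s ih =>
      intro h1 h2 h3
      rw [show Dw b a (s+1) = Tw b a s * Dw b (a+1) s from rfl, ← mul_assoc,
        Tcomm_lo hcomm i a s h1 h2 (by omega), mul_assoc, ih (a+1) h1 (by omega) (by omega),
        ← mul_assoc]


lemma S_shift (hcomm : Hc k b) (hbraid : Hb k b) (a m i : ℕ) (h1 : 1 ≤ a) (h2 : a + m ≤ k)
    (h3 : a ≤ i) (h4 : i + 2 ≤ a + m) :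
    Sw b a m * b i = b (i+1) * Sw b a m := by
  induction m with
  | zero => omega
  | succ m ih =>
    by_cases hc : i + 2 ≤ a + m
    · rw [show Sw b a (m+1) = Sw b a m * b (a+m) from rfl, mul_assoc,
        (bb hcomm i (a+m) (by omega) (by omega) (by omega)).symm, ← mul_assoc,
        ih (by omega) hc, mul_assoc]
    · obtain ⟨m', rfl⟩ : ∃ m', m = m' + 1 := ⟨m - 1, by omega⟩
      obtain rfl : i = a + m' := by omega
      have e1 : a + (m'+1) = (a+m') + 1 := by omega
      have h6 : Sw b a m' * b ((a+m')+1) = b ((a+m')+1) * Sw b a m' :=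
        Scomm_hi hcomm a m' ((a+m')+1) h1 (by omega) (by omega)
      calc Sw b a (m'+2) * b (a+m')
          = Sw b a m' * (b (a+m') * b ((a+m')+1) * b (a+m')) := by
            rw [show Sw b a (m'+2) = Sw b a (m'+1) * b (a+(m'+1)) from rfl,
               show Sw b a (m'+1) = Sw b a m' * b (a+m') from rfl, e1]; group
        _ = Sw b a m' * (b ((a+m')+1) * b (a+m') * b ((a+m')+1)) := by
            rw [br hbraid (a+m') (by omega) (by omega)]
        _ = Sw b a m' * b ((a+m')+1) * (b (a+m') * b ((a+m')+1)) := by group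
        _ = b ((a+m')+1) * Sw b a m' * (b (a+m') * b ((a+m')+1)) := by rw [h6]
        _ = b ((a+m')+1) * Sw b a (m'+2) := by
            rw [show Sw b a (m'+2) = Sw b a (m'+1) * b (a+(m'+1)) from rfl,
               show Sw b a (m'+1) = Sw b a m' * b (a+m') from rfl, e1]; group

lemma T_shift (hcomm : Hc k b) (hbraid : Hb k b) (a m i : ℕ) (h1 : 1 ≤ a) (h2 : a + m ≤ k)
    (h3 : a ≤ i) (h4 : i + 2 ≤ a + m) :
    Tw b a m * b (i+1) = b i * Tw b a m := by
  induction m with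
  | zero => omega
  | succ m ih =>
    by_cases hc : i + 2 ≤ a + m
    · rw [show Tw b a (m+1) = b (a+m) * Tw b a m from rfl, mul_assoc,
        ih (by omega) hc, ← mul_assoc,
        (bb hcomm i (a+m) (by omega) (by omega) (by omega)).symm, mul_assoc]
    · obtain ⟨m', rfl⟩ : ∃ m', m = m' + 1 := ⟨m - 1, by omega⟩
      obtain rfl : i = a + m' := by omega
      have e1 : a + (m'+1) = (a+m') + 1 := by omega
      have h6 : Tw b a m' * b ((a+m')+1) = b ((a+m')+1) * Tw b a m' :=
        Tcomm_hi hcomm a m' ((a+m')+1) h1 (by omega) (by omega)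
      calc Tw b a (m'+2) * b ((a+m')+1)
          = b ((a+m')+1) * b (a+m') * (Tw b a m' * b ((a+m')+1)) := by
            rw [show Tw b a (m'+2) = b (a+(m'+1)) * Tw b a (m'+1) from rfl,
               show Tw b a (m'+1) = b (a+m') * Tw b a m' from rfl, e1]; group
        _ = b ((a+m')+1) * b (a+m') * (b ((a+m')+1) * Tw b a m') := by rw [h6]
        _ = b ((a+m')+1) * b (a+m') * b ((a+m')+1) * Tw b a m' := by group
        _ = b (a+m') * b ((a+m')+1) * b (a+m') * Tw b a m' := by
            rw [(br hbraid (a+m') (by omega) (by omega)).symm]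
        _ = b (a+m') * Tw b a (m'+2) := by
            rw [show Tw b a (m'+2) = b (a+(m'+1)) * Tw b a (m'+1) from rfl,
               show Tw b a (m'+1) = b (a+m') * Tw b a m' from rfl, e1]; group


/-- conjugation by the ascending word `Sw a m` shifts an in-range ascending word up by one -/
lemma S_shift_S (hcomm : Hc k b) (hbraid : Hb k b) (a m c s : ℕ) (h1 : 1 ≤ a) (h2 : a + m ≤ k) (h3 : a ≤ c)
    (h4 : c + s + 1 ≤ a + m) :
    Sw b a m * Sw b c s = Sw b (c+1) s * Sw b a m := by
  induction s with
  | zero => simp [Sw]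
  | succ s ih =>
      have e : (c+1) + s = (c+s) + 1 := by omega
      rw [show Sw b c (s+1) = Sw b c s * b (c+s) from rfl,
        show Sw b (c+1) (s+1) = Sw b (c+1) s * b ((c+1)+s) from rfl, e,
        ← mul_assoc, ih (by omega), mul_assoc,
        S_shift hcomm hbraid a m (c+s) h1 h2 (by omega) (by omega), ← mul_assoc]

lemma S_shift_T (hcomm : Hc k b) (hbraid : Hb k b) (a m c s : ℕ) (h1 : 1 ≤ a) (h2 : a + m ≤ k) (h3 : a ≤ c)
    (h4 : c + s + 1 ≤ a + m) :
    Sw b a m * Tw b c s = Tw b (c+1) s * Sw b a m := by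
  induction s with
  | zero => simp [Tw]
  | succ s ih =>
      have e : (c+1) + s = (c+s) + 1 := by omega
      rw [show Tw b c (s+1) = b (c+s) * Tw b c s from rfl,
        show Tw b (c+1) (s+1) = b ((c+1)+s) * Tw b (c+1) s from rfl, e,
        ← mul_assoc, S_shift hcomm hbraid a m (c+s) h1 h2 (by omega) (by omega),
        mul_assoc, ih (by omega), ← mul_assoc]

lemma S_shift_D (hcomm : Hc k b) (hbraid : Hb k b) (a m : ℕ) : ∀ c s : ℕ, 1 ≤ a → a + m ≤ k → a ≤ c → c + s ≤ a + m →
    Sw b a m * Dw b c s = Dw b (c+1) s * Sw b a m := by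
  intro c s
  induction s generalizing c with
  | zero => intro _ _ _ _; simp [Dw]
  | succ s ih =>
      intro h1 h2 h3 h4
      calc Sw b a m * Dw b c (s+1)
          = Sw b a m * Tw b c s * Dw b (c+1) s := by
            rw [show Dw b c (s+1) = Tw b c s * Dw b (c+1) s from rfl]; group
        _ = Tw b (c+1) s * (Sw b a m * Dw b (c+1) s) := by
            rw [S_shift_T hcomm hbraid a m c s h1 h2 h3 (by omega)]; group
        _ = Tw b (c+1) s * (Dw b (c+2) s * Sw b a m) := by
            rw [ih (c+1) h1 h2 (by omega) (by omega)]
        _ = Dw b (c+1) (s+1) * Sw b a m := by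
            rw [show Dw b (c+1) (s+1) = Tw b (c+1) s * Dw b (c+2) s from rfl]; group

/-- R2 recursion -/
lemma R2 (hcomm : Hc k b) : ∀ a s : ℕ, 1 ≤ a → a + s ≤ k → Dw b a (s+1) = Dw b (a+1) s * Sw b a s := by
  intro a s
  induction s generalizing a with
  | zero => intro _ _; simp [Dw, Sw, Tw]
  | succ s ih =>
      intro h1 h2
      calc Dw b a (s+2)
          = Tw b a (s+1) * Dw b (a+1) (s+1) := rfl
        _ = Tw b a (s+1) * (Dw b (a+2) s * Sw b (a+1) s) := by
            rw [ih (a+1) (by omega) (by omega)]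
        _ = Tw b (a+1) s * (b a * Dw b (a+2) s) * Sw b (a+1) s := by
            rw [Tw_cons b a s]; group
        _ = Tw b (a+1) s * (Dw b (a+2) s * b a) * Sw b (a+1) s := by
            rw [Dcomm_lo hcomm a (a+2) s h1 (by omega) (by omega)]
        _ = (Tw b (a+1) s * Dw b (a+2) s) * (b a * Sw b (a+1) s) := by group
        _ = Dw b (a+1) (s+1) * Sw b a (s+1) := by
            rw [← Sw_cons b a s, show Dw b (a+1) (s+1) = Tw b (a+1) s * Dw b (a+2) s from rfl]
  
/-- `Tw a (s+1) * Sw (a+1) s = Sw a (s+1) * Tw a s` -/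
lemma Theta (hcomm : Hc k b) (hbraid : Hb k b) : ∀ s a : ℕ, 1 ≤ a → a + s + 1 ≤ k →
    Tw b a (s+1) * Sw b (a+1) s = Sw b a (s+1) * Tw b a s := by
  intro s
  induction s with
  | zero => intro a _ _; simp [Sw, Tw]
  | succ s ih =>
      intro a h1 h2
      have e1 : a + (s+1) = (a+s) + 1 := by omega
      have e2 : (a+1) + s = (a+s) + 1 := by omega
      calc Tw b a (s+2) * Sw b (a+1) (s+1)
          = b ((a+s)+1) * (Tw b a (s+1) * Sw b (a+1) s) * b ((a+s)+1) := by
            rw [show Tw b a (s+2) = b (a+(s+1)) * Tw b a (s+1) from rfl,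
              show Sw b (a+1) (s+1) = Sw b (a+1) s * b ((a+1)+s) from rfl, e1, e2]; group
        _ = b ((a+s)+1) * (Sw b a (s+1) * Tw b a s) * b ((a+s)+1) := by
            rw [ih a h1 (by omega)]
        _ = b ((a+s)+1) * Sw b a (s+1) * (Tw b a s * b ((a+s)+1)) := by group
        _ = b ((a+s)+1) * Sw b a (s+1) * (b ((a+s)+1) * Tw b a s) := by
            rw [Tcomm_hi hcomm a s ((a+s)+1) h1 (by omega) (by omega)]
        _ = b ((a+s)+1) * (Sw b a s * b (a+s)) * (b ((a+s)+1) * Tw b a s) := by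
            rw [show Sw b a (s+1) = Sw b a s * b (a+s) from rfl]
        _ = b ((a+s)+1) * Sw b a s * (b (a+s) * b ((a+s)+1)) * Tw b a s := by group
        _ = Sw b a s * b ((a+s)+1) * (b (a+s) * b ((a+s)+1)) * Tw b a s := by
            rw [Scomm_hi hcomm a s ((a+s)+1) h1 (by omega) (by omega)]
        _ = Sw b a s * (b ((a+s)+1) * b (a+s) * b ((a+s)+1)) * Tw b a s := by group
        _ = Sw b a s * (b (a+s) * b ((a+s)+1) * b (a+s)) * Tw b a s := by
            rw [br hbraid (a+s) (by omega) (by omega)]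
        _ = (Sw b a s * b (a+s)) * b ((a+s)+1) * (b (a+s) * Tw b a s) := by group
        _ = Sw b a (s+2) * Tw b a (s+1) := by
            rw [show Sw b a (s+2) = Sw b a (s+1) * b (a+(s+1)) from rfl,
              show Sw b a (s+1) = Sw b a s * b (a+s) from rfl,
              show Tw b a (s+1) = b (a+s) * Tw b a s from rfl, e1]

/-- R4 recursion -/
lemma R4 (hcomm : Hc k b) (hbraid : Hb k b) : ∀ s a : ℕ, 1 ≤ a → a + s ≤ k →
    Dw b a (s+1) = Sw b a s * Dw b a s := by
  intro s
  induction s with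
  | zero => intro a _ _; simp [Dw, Sw, Tw]
  | succ s ih =>
      intro a h1 h2
      calc Dw b a (s+2)
          = Tw b a (s+1) * Dw b (a+1) (s+1) := rfl
        _ = Tw b a (s+1) * (Sw b (a+1) s * Dw b (a+1) s) := by
            rw [ih (a+1) (by omega) (by omega)]
        _ = (Tw b a (s+1) * Sw b (a+1) s) * Dw b (a+1) s := by group
        _ = (Sw b a (s+1) * Tw b a s) * Dw b (a+1) s := by
            rw [Theta hcomm hbraid s a h1 (by omega)]
        _ = Sw b a (s+1) * Dw b a (s+1) := by
            rw [show Dw b a (s+1) = Tw b a s * Dw b (a+1) s from rfl]; group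

/-- F1: reflection property of the half twist -/
lemma F1 (hcomm : Hc k b) (hbraid : Hb k b) : ∀ s a i j : ℕ, 1 ≤ a → a + s ≤ k + 1 →
    a ≤ i → a ≤ j → i + j + 2 = 2*a + s → Dw b a s * b i = b j * Dw b a s := by
  intro s
  induction s with
  | zero => intro a i j _ _ _ _ _; omega
  | succ s ih =>
      intro a i j h1 h2 h3 h4 h5
      rcases Nat.lt_or_ge a i with hgt | hle
      · -- interior case, i ≥ a + 1
        calc Dw b a (s+1) * b i
            = Tw b a s * (Dw b (a+1) s * b i) := by
              rw [show Dw b a (s+1) = Tw b a s * Dw b (a+1) s from rfl]; group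
          _ = Tw b a s * (b (j+1) * Dw b (a+1) s) := by
              rw [ih (a+1) i (j+1) (by omega) (by omega) (by omega) (by omega) (by omega)]
          _ = (Tw b a s * b (j+1)) * Dw b (a+1) s := by group
          _ = (b j * Tw b a s) * Dw b (a+1) s := by
              rw [T_shift hcomm hbraid a s j h1 (by omega) (by omega) (by omega)]
          _ = b j * Dw b a (s+1) := by
              rw [show Dw b a (s+1) = Tw b a s * Dw b (a+1) s from rfl]; group
      · -- boundary case, i = a
        rw [show i = a from by omega]
        rcases Nat.lt_or_ge (s+1) 3 with hs | hs
        · -- s + 1 = 2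
          obtain rfl : s = 1 := by omega
          rw [show j = a from by omega]
          simp [Dw, Tw]
        · obtain ⟨s', rfl⟩ : ∃ s', s = s' + 2 := ⟨s - 2, by omega⟩
          rw [show j = a + (s'+1) from by omega]
          calc Dw b a (s'+3) * b a
              = Dw b (a+1) (s'+2) * (Sw b a (s'+2) * b a) := by
                rw [R2 hcomm a (s'+2) h1 (by omega)]; group
            _ = Dw b (a+1) (s'+2) * (b (a+1) * Sw b a (s'+2)) := by
                rw [S_shift hcomm hbraid a (s'+2) a h1 (by omega) (by omega) (by omega)]
            _ = (Dw b (a+1) (s'+2) * b (a+1)) * Sw b a (s'+2) := by group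
            _ = (b (a+(s'+1)) * Dw b (a+1) (s'+2)) * Sw b a (s'+2) := by
                rw [ih (a+1) (a+1) (a+(s'+1)) (by omega) (by omega) (by omega) (by omega)
                  (by omega)]
            _ = b (a+(s'+1)) * Dw b a (s'+3) := by
                rw [R2 hcomm a (s'+2) h1 (by omega)]; group

/-- moving a full ascending word through the half twist reflects it to a descending word -/
lemma DSfull (hcomm : Hc k b) (hbraid : Hb k b) (s' a : ℕ) (h1 : 1 ≤ a) (h2 : a + s' ≤ k) :
    ∀ j e : ℕ, j + e = s' → Dw b a (s'+1) * Sw b a j = Tw b (a+e) j * Dw b a (s'+1) := by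
  intro j
  induction j with
  | zero => intro e _; simp [Sw, Tw]
  | succ j ih =>
      intro e he
      calc Dw b a (s'+1) * Sw b a (j+1)
          = (Dw b a (s'+1) * Sw b a j) * b (a+j) := by
            rw [show Sw b a (j+1) = Sw b a j * b (a+j) from rfl]; group
        _ = Tw b (a+(e+1)) j * (Dw b a (s'+1) * b (a+j)) := by
            rw [ih (e+1) (by omega)]; group
        _ = Tw b (a+(e+1)) j * (b (a+e) * Dw b a (s'+1)) := by
            rw [F1 hcomm hbraid (s'+1) a (a+j) (a+e) h1 (by omega) (by omega) (by omega)
              (by omega)]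
        _ = (Tw b ((a+e)+1) j * b (a+e)) * Dw b a (s'+1) := by
            rw [show a+(e+1) = (a+e)+1 from by omega]; group
        _ = Tw b (a+e) (j+1) * Dw b a (s'+1) := by rw [← Tw_cons b (a+e) j]

/-- the key descending-word exchange identity -/
lemma Ylem (hcomm : Hc k b) (hbraid : Hb k b) : ∀ j : ℕ, j + 2 ≤ k →
    Tw b 1 j * Tw b 1 (j+1) = Tw b 1 (j+1) * Tw b 2 j := by
  intro j
  induction j with
  | zero => intro _; simp [Tw]
  | succ j ih =>
      intro h2
      have e1 : 1 + (j+1) = j + 2 := by omega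
      have e2 : 1 + j = j + 1 := by omega
      have e3 : 2 + j = j + 2 := by omega
      calc Tw b 1 (j+1) * Tw b 1 (j+2)
          = b (j+1) * (Tw b 1 j * b (j+2)) * (b (j+1) * Tw b 1 j) := by
            rw [show Tw b 1 (j+2) = b (1+(j+1)) * Tw b 1 (j+1) from rfl,
              show Tw b 1 (j+1) = b (1+j) * Tw b 1 j from rfl, e1, e2]; group
        _ = b (j+1) * (b (j+2) * Tw b 1 j) * (b (j+1) * Tw b 1 j) := by
            rw [Tcomm_hi hcomm 1 j (j+2) (by omega) (by omega) (by omega)]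
        _ = b (j+1) * b (j+2) * (Tw b 1 j * Tw b 1 (j+1)) := by
            rw [show Tw b 1 (j+1) = b (1+j) * Tw b 1 j from rfl, e2]; group
        _ = b (j+1) * b (j+2) * (Tw b 1 (j+1) * Tw b 2 j) := by rw [ih (by omega)]
        _ = (b (j+1) * b (j+2) * b (j+1)) * (Tw b 1 j * Tw b 2 j) := by
            rw [show Tw b 1 (j+1) = b (1+j) * Tw b 1 j from rfl, e2]; group
        _ = (b (j+2) * b (j+1) * b (j+2)) * (Tw b 1 j * Tw b 2 j) := by
            rw [br hbraid (j+1) (by omega) (by omega)]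
        _ = b (j+2) * b (j+1) * (b (j+2) * Tw b 1 j) * Tw b 2 j := by group
        _ = b (j+2) * b (j+1) * (Tw b 1 j * b (j+2)) * Tw b 2 j := by
            rw [← Tcomm_hi hcomm 1 j (j+2) (by omega) (by omega) (by omega)]
        _ = Tw b 1 (j+2) * Tw b 2 (j+1) := by
            rw [show Tw b 1 (j+2) = b (1+(j+1)) * Tw b 1 (j+1) from rfl,
              show Tw b 1 (j+1) = b (1+j) * Tw b 1 j from rfl,
              show Tw b 2 (j+1) = b (2+j) * Tw b 2 j from rfl, e1, e2, e3]; group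

/-- conjugating `b 1` by powers of `γ = Sw 2 mv` -/
lemma Xlem (hcomm : Hc k b) (hbraid : Hb k b) (mv : ℕ) (hm : 2 + mv ≤ k) : ∀ j : ℕ, j + 1 ≤ mv →
    (Sw b 2 mv)^j * b 1 = Tw b 2 j * b 1 * (Tw b 2 j)⁻¹ * (Sw b 2 mv)^j := by
  intro j
  induction j with
  | zero => intro _; simp [Tw]
  | succ j ih =>
      intro h2
      obtain ⟨mw, rfl⟩ : ∃ mw, mv = mw + 1 := ⟨mv - 1, by omega⟩
      have hsh : Sw b 2 (mw+1) * Tw b 2 j = Tw b 3 j * Sw b 2 (mw+1) :=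
        S_shift_T hcomm hbraid 2 (mw+1) 2 j (by omega) (by omega) (by omega) (by omega)
      have hshinv : Sw b 2 (mw+1) * (Tw b 2 j)⁻¹ = (Tw b 3 j)⁻¹ * Sw b 2 (mw+1) := by
        have h3 : Tw b 3 j = Sw b 2 (mw+1) * Tw b 2 j * (Sw b 2 (mw+1))⁻¹ := by
          rw [hsh]; group
        rw [h3]; group
      have hb1 : Sw b 2 (mw+1) * b 1 = b 2 * b 1 * (b 2)⁻¹ * Sw b 2 (mw+1) := by
        rw [Sw_cons b 2 mw, show (2:ℕ)+1 = 3 from rfl, mul_assoc,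
          ← Scomm_lo hcomm 1 3 mw (by omega) (by omega) (by omega)]
        group
      calc (Sw b 2 (mw+1))^(j+1) * b 1
          = Sw b 2 (mw+1) * ((Sw b 2 (mw+1))^j * b 1) := by
            rw [pow_succ']; group
        _ = Sw b 2 (mw+1) * (Tw b 2 j * b 1 * (Tw b 2 j)⁻¹ * (Sw b 2 (mw+1))^j) := by
            rw [ih (by omega)]
        _ = (Sw b 2 (mw+1) * Tw b 2 j) * b 1 * (Tw b 2 j)⁻¹ * (Sw b 2 (mw+1))^j := by group
        _ = Tw b 3 j * (Sw b 2 (mw+1) * b 1) * (Tw b 2 j)⁻¹ * (Sw b 2 (mw+1))^j := by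
            rw [hsh]; group
        _ = Tw b 3 j * (b 2 * b 1 * (b 2)⁻¹) * (Sw b 2 (mw+1) * (Tw b 2 j)⁻¹) *
              (Sw b 2 (mw+1))^j := by rw [hb1]; group
        _ = Tw b 3 j * (b 2 * b 1 * (b 2)⁻¹) * (Tw b 3 j)⁻¹ *
              (Sw b 2 (mw+1) * (Sw b 2 (mw+1))^j) := by rw [hshinv]; group
        _ = Tw b 2 (j+1) * b 1 * (Tw b 2 (j+1))⁻¹ * (Sw b 2 (mw+1))^(j+1) := by
            rw [Tw_cons b 2 j, pow_succ']; group

/-- powers of the Coxeter word peel off descending words -/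
lemma V3 (hcomm : Hc k b) (hbraid : Hb k b) (mv : ℕ) (hm : 2 + mv ≤ k) : ∀ j : ℕ, j ≤ mv →
    (Sw b 1 (mv+1))^j = Tw b 1 j * (Sw b 2 mv)^j := by
  intro j
  induction j with
  | zero => intro _; simp [Tw]
  | succ j ih =>
      intro h2
      calc (Sw b 1 (mv+1))^(j+1)
          = (Sw b 1 (mv+1))^j * Sw b 1 (mv+1) := by rw [pow_succ]
        _ = Tw b 1 j * (Sw b 2 mv)^j * (b 1 * Sw b 2 mv) := by
            rw [ih (by omega), Sw_cons b 1 mv]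
        _ = Tw b 1 j * ((Sw b 2 mv)^j * b 1) * Sw b 2 mv := by group
        _ = Tw b 1 j * (Tw b 2 j * b 1 * (Tw b 2 j)⁻¹ * (Sw b 2 mv)^j) * Sw b 2 mv := by
            rw [Xlem hcomm hbraid mv hm j (by omega)]
        _ = Tw b 1 j * (Tw b 2 j * b 1) * (Tw b 2 j)⁻¹ * (Sw b 2 mv)^(j+1) := by
            rw [pow_succ]; group
        _ = (Tw b 1 j * Tw b 1 (j+1)) * (Tw b 2 j)⁻¹ * (Sw b 2 mv)^(j+1) := by
            rw [Tw_cons b 1 j]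
        _ = (Tw b 1 (j+1) * Tw b 2 j) * (Tw b 2 j)⁻¹ * (Sw b 2 mv)^(j+1) := by
            rw [Ylem hcomm hbraid j (by omega)]
        _ = Tw b 1 (j+1) * (Sw b 2 mv)^(j+1) := by group

/-- main induction: `c^(m+1) = Δ c Δ` on `m+2` strands -/
lemma Klem (hcomm : Hc k b) (hbraid : Hb k b) : ∀ m : ℕ, m + 2 ≤ k →
    (Sw b 1 (m+1))^(m+1) = Dw b 1 (m+1) * Sw b 1 (m+1) * Dw b 1 (m+1) := by
  intro m
  induction m with
  | zero => intro _; simp [Sw, Dw, Tw]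
  | succ m ih =>
      intro h2
      have e1 : 1 + (m+1) = m + 2 := by omega
      -- key subterms
      have hDS : Dw b 1 (m+2) * Sw b 1 (m+1) = Tw b 1 (m+1) * Dw b 1 (m+2) := by
        have := DSfull hcomm hbraid (m+1) 1 (by omega) (by omega) (m+1) 0 (by omega)
        simpa using this
      have hR2 : Dw b 1 (m+2) = Dw b 2 (m+1) * Sw b 1 (m+1) :=
        R2 hcomm 1 (m+1) (by omega) (by omega)
      have hcD1 : Sw b 1 (m+2) * Dw b 1 (m+1) = Dw b 2 (m+1) * Sw b 1 (m+2) :=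
        S_shift_D hcomm hbraid 1 (m+2) 1 (m+1) (by omega) (by omega) (by omega) (by omega)
      have hcD2 : Sw b 1 (m+2) * Dw b 1 (m+2) = Dw b 2 (m+2) * Sw b 1 (m+2) :=
        S_shift_D hcomm hbraid 1 (m+2) 1 (m+2) (by omega) (by omega) (by omega) (by omega)
      have hR4 : Dw b 1 (m+2) = Sw b 1 (m+1) * Dw b 1 (m+1) :=
        R4 hcomm hbraid (m+1) 1 (by omega) (by omega)
      have hcS : Sw b 1 (m+2) * (Sw b 1 (m+1))^(m+1) = (Sw b 2 (m+1))^(m+1) * Sw b 1 (m+2) := by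
        have h := S_shift_S hcomm hbraid 1 (m+2) 1 (m+1) (by omega) (by omega) (by omega)
          (by omega)
        exact (SemiconjBy.pow_right h (m+1))
      have hV : (Sw b 1 (m+2))^(m+1) = Tw b 1 (m+1) * (Sw b 2 (m+1))^(m+1) :=
        V3 hcomm hbraid (m+1) (by omega) (m+1) (by omega)
      -- assemble
      have key : Dw b 1 (m+2) * Sw b 1 (m+2) * Dw b 1 (m+2) = (Sw b 1 (m+2))^(m+2) := by
        calc Dw b 1 (m+2) * Sw b 1 (m+2) * Dw b 1 (m+2)
            = (Dw b 1 (m+2) * Sw b 1 (m+1)) * b (m+2) * Dw b 1 (m+2) := by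
              rw [show Sw b 1 (m+2) = Sw b 1 (m+1) * b (1+(m+1)) from rfl, e1]; group
          _ = Tw b 1 (m+1) * (Dw b 1 (m+2) * b (m+2) * Dw b 1 (m+2)) := by
              rw [hDS]; group
          _ = Tw b 1 (m+1) * (Dw b 2 (m+1) * (Sw b 1 (m+1) * b (m+2)) * Dw b 1 (m+2)) := by
              rw [hR2]; group
          _ = Tw b 1 (m+1) * (Dw b 2 (m+1) * (Sw b 1 (m+2) * Dw b 1 (m+2))) := by
              rw [show Sw b 1 (m+2) = Sw b 1 (m+1) * b (1+(m+1)) from rfl, e1]; group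
          _ = Tw b 1 (m+1) * (Dw b 2 (m+1) * (Dw b 2 (m+2) * Sw b 1 (m+2))) := by
              rw [hcD2]
          _ = Tw b 1 (m+1) * ((Sw b 1 (m+2) * Dw b 1 (m+1)) * (Sw b 1 (m+2))⁻¹ *
                ((Sw b 1 (m+2) * Dw b 1 (m+2)) * (Sw b 1 (m+2))⁻¹) * Sw b 1 (m+2)) := by
              rw [hcD1, hcD2]; group
          _ = Tw b 1 (m+1) * (Sw b 1 (m+2) * (Dw b 1 (m+1) * Dw b 1 (m+2))) := by group
          _ = Tw b 1 (m+1) * (Sw b 1 (m+2) *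
                (Dw b 1 (m+1) * Sw b 1 (m+1) * Dw b 1 (m+1))) := by
              rw [hR4]; group
          _ = Tw b 1 (m+1) * (Sw b 1 (m+2) * (Sw b 1 (m+1))^(m+1)) := by
              rw [ih (by omega)]
          _ = (Tw b 1 (m+1) * (Sw b 2 (m+1))^(m+1)) * Sw b 1 (m+2) := by
              rw [hcS]; group
          _ = (Sw b 1 (m+2))^(m+1) * Sw b 1 (m+2) := by rw [hV]
          _ = (Sw b 1 (m+2))^(m+2) := by rw [← pow_succ]
      rw [key]

lemma conjpow (x y : G) (n : ℕ) : (x * y * x⁻¹)^n = x * y^n * x⁻¹ := by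
  induction n with
  | zero => simp
  | succ n ih => rw [pow_succ, ih, pow_succ]; group

lemma Sw_list (bb : ℕ → G) : ∀ mm a : ℕ,
    Sw bb a mm = ((List.range mm).map (fun i => bb (a+i))).prod := by
  intro mm a
  induction mm with
  | zero => simp [Sw]
  | succ mm ih => rw [List.range_succ]; simp [Sw, ih]

lemma Ew_list (bb : ℕ → G) : ∀ r c : ℕ,
    Ew bb c r = ((List.range r).map (fun i => bb (c+2*i))).prod := by
  intro r c
  induction r with
  | zero => simp [Ew]
  | succ r ih => rw [List.range_succ]; simp [Ew, ih]


end Stmt15Aux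


open Stmt15Aux

/-- For elements `b₁, …, b_{k-1}` of a group satisfying the braid relations, with
`P_odd` the product of the `b_i` over odd `i` in `[1, k-1]` and `P_even` the product
over even `i` in `[2, k-1]`, one has
`(P_odd·P_even)^k = (P_even·P_odd)^k = (b₁·b₂·⋯·b_{k-1})^k` (the full twist). -/
theorem stmt_15 {G : Type*} [Group G] (k : ℕ) (hk : 2 ≤ k) (b : ℕ → G)
    (hcomm : ∀ i j : ℕ, 1 ≤ i → i ≤ k - 1 → 1 ≤ j → j ≤ k - 1 → (i + 2 ≤ j ∨ j + 2 ≤ i) →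
      b i * b j = b j * b i)
    (hbraid : ∀ i : ℕ, 1 ≤ i → i + 1 ≤ k - 1 →
      b i * b (i + 1) * b i = b (i + 1) * b i * b (i + 1)) :
    (((List.range (k / 2)).map (fun m => b (2 * m + 1))).prod *
          ((List.range ((k - 1) / 2)).map (fun m => b (2 * m + 2))).prod) ^ k =
        (((List.range (k - 1)).map (fun m => b (m + 1))).prod) ^ k ∧
    (((List.range ((k - 1) / 2)).map (fun m => b (2 * m + 2))).prod *
          ((List.range (k / 2)).map (fun m => b (2 * m + 1))).prod) ^ k =
        (((List.range (k - 1)).map (fun m => b (m + 1))).prod) ^ k := by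
  obtain ⟨m, rfl⟩ : ∃ m, k = m + 2 := ⟨k - 2, by omega⟩
  have hcomm' : Hc (m+2) b := hcomm
  have hbraid' : Hb (m+2) b := hbraid
  have hk1 : m + 2 - 1 = m + 1 := by omega
  rw [hk1]
  -- identify the list products with the structured words
  have hA : ((List.range ((m+2) / 2)).map (fun i => b (2 * i + 1))).prod
      = Ew b 1 ((m+2)/2) := by
    rw [Ew_list]
    exact congrArg List.prod (List.map_congr_left (fun i _ => by ring_nf))
  have hB : ((List.range ((m+1) / 2)).map (fun i => b (2 * i + 2))).prod
      = Ew b 2 ((m+1)/2) := by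
    rw [Ew_list]
    exact congrArg List.prod (List.map_congr_left (fun i _ => by ring_nf))
  have hC : ((List.range (m+1)).map (fun i => b (i + 1))).prod = Sw b 1 (m+1) := by
    rw [Sw_list]
    exact congrArg List.prod (List.map_congr_left (fun i _ => by ring_nf))
  rw [hA, hB, hC]
  -- abbreviations
  set Z : G := Dw b 1 (m+2) * Dw b 1 (m+2) with hZ
  -- F2 : the Coxeter word power is the full twist
  have hF2 : (Sw b 1 (m+1))^(m+2) = Z := by
    have hK := Klem hcomm' hbraid' m (by omega)
    have hR4 : Dw b 1 (m+2) = Sw b 1 (m+1) * Dw b 1 (m+1) :=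
      R4 hcomm' hbraid' (m+1) 1 (by omega) (by omega)
    calc (Sw b 1 (m+1))^(m+2)
        = Sw b 1 (m+1) * (Sw b 1 (m+1))^(m+1) := by rw [pow_succ']
      _ = Sw b 1 (m+1) * (Dw b 1 (m+1) * Sw b 1 (m+1) * Dw b 1 (m+1)) := by rw [hK]
      _ = (Sw b 1 (m+1) * Dw b 1 (m+1)) * (Sw b 1 (m+1) * Dw b 1 (m+1)) := by group
      _ = Z := by rw [hZ, hR4]
  -- centrality of the full twist
  have hZb : ∀ i : ℕ, 1 ≤ i → i ≤ m + 1 → Z * b i = b i * Z := by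
    intro i h1 h2
    have hf1 : Dw b 1 (m+2) * b i = b (m+2-i) * Dw b 1 (m+2) :=
      F1 hcomm' hbraid' (m+2) 1 i (m+2-i) (by omega) (by omega) (by omega) (by omega)
        (by omega)
    have hf2 : Dw b 1 (m+2) * b (m+2-i) = b i * Dw b 1 (m+2) :=
      F1 hcomm' hbraid' (m+2) 1 (m+2-i) i (by omega) (by omega) (by omega) (by omega)
        (by omega)
    calc Z * b i = Dw b 1 (m+2) * (Dw b 1 (m+2) * b i) := by rw [hZ]; group
      _ = Dw b 1 (m+2) * (b (m+2-i) * Dw b 1 (m+2)) := by rw [hf1]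
      _ = (Dw b 1 (m+2) * b (m+2-i)) * Dw b 1 (m+2) := by group
      _ = b i * Z := by rw [hf2, hZ]; group
  have hZE : ∀ c r : ℕ, 1 ≤ c → c + 2*r ≤ m + 3 → Z * Ew b c r = Ew b c r * Z := by
    intro c r h1 h2
    induction r with
    | zero => simp [Ew]
    | succ r ih =>
        calc Z * Ew b c (r+1)
            = (Z * Ew b c r) * b (c+2*r) := by
              rw [show Ew b c (r+1) = Ew b c r * b (c+2*r) from rfl]; group
          _ = Ew b c r * (Z * b (c+2*r)) := by rw [ih (by omega)]; group
          _ = Ew b c r * (b (c+2*r) * Z) := by rw [hZb (c+2*r) (by omega) (by omega)]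
          _ = Ew b c (r+1) * Z := by
              rw [show Ew b c (r+1) = Ew b c r * b (c+2*r) from rfl]; group
  -- the rotating family of words
  set W : ℕ → G := fun j => Sw b 1 j * Ew b (j+1) ((m+2-j)/2) * Ew b (j+2) ((m+1-j)/2)
    with hW
  have hWtop : W (m+1) = Sw b 1 (m+1) := by
    rw [hW]
    simp only [show (m+2-(m+1))/2 = 0 from by omega, show (m+1-(m+1))/2 = 0 from by omega]
    simp [Ew]
  have hWstep : ∀ j : ℕ, j ≤ m →
      W j = Ew b (j+3) ((m-j)/2) * W (j+1) * (Ew b (j+3) ((m-j)/2))⁻¹ := by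
    intro j hj
    have hEc : Ew b (j+1) ((m+2-j)/2) = b (j+1) * Ew b (j+3) ((m-j)/2) := by
      obtain ⟨r, hr⟩ : ∃ r, (m+2-j)/2 = r + 1 := ⟨(m+2-j)/2 - 1, by omega⟩
      rw [hr, Ew_cons b (j+1) r, show (j+1)+2 = j+3 from by omega,
        show r = (m-j)/2 from by omega]
    have hUS : Ew b (j+3) ((m-j)/2) * Sw b 1 j = Sw b 1 j * Ew b (j+3) ((m-j)/2) :=
      (SEcomm hcomm' 1 j (j+3) ((m-j)/2) (by omega) (by omega) (by omega)).symm
    have hUb : Ew b (j+3) ((m-j)/2) * b (j+1) = b (j+1) * Ew b (j+3) ((m-j)/2) :=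
      (Ecomm_lo hcomm' (j+1) (j+3) ((m-j)/2) (by omega) (by omega) (by omega)).symm
    have e1 : (m+2-(j+1))/2 = (m+1-j)/2 := by omega
    have e2 : (m+1-(j+1))/2 = (m-j)/2 := by omega
    have e3 : (1:ℕ) + j = j + 1 := by omega
    rw [hW]
    simp only [e1, e2]
    rw [show Sw b 1 (j+1) = Sw b 1 j * b (1+j) from rfl, e3, hEc]
    calc Sw b 1 j * (b (j+1) * Ew b (j+3) ((m-j)/2)) * Ew b (j+2) ((m+1-j)/2)
        = Sw b 1 j * b (j+1) * (Ew b (j+3) ((m-j)/2) * Ew b (j+2) ((m+1-j)/2) *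
            Ew b (j+3) ((m-j)/2) * (Ew b (j+3) ((m-j)/2))⁻¹) := by group
      _ = Ew b (j+3) ((m-j)/2) * (Sw b 1 j * b (j+1) * Ew b (j+2) ((m+1-j)/2) *
            Ew b (j+3) ((m-j)/2)) * (Ew b (j+3) ((m-j)/2))⁻¹ := by
          calc Sw b 1 j * b (j+1) * (Ew b (j+3) ((m-j)/2) * Ew b (j+2) ((m+1-j)/2) *
                Ew b (j+3) ((m-j)/2) * (Ew b (j+3) ((m-j)/2))⁻¹)
              = Sw b 1 j * (b (j+1) * Ew b (j+3) ((m-j)/2)) * (Ew b (j+2) ((m+1-j)/2) *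
                Ew b (j+3) ((m-j)/2) * (Ew b (j+3) ((m-j)/2))⁻¹) := by group
            _ = Sw b 1 j * (Ew b (j+3) ((m-j)/2) * b (j+1)) * (Ew b (j+2) ((m+1-j)/2) *
                Ew b (j+3) ((m-j)/2) * (Ew b (j+3) ((m-j)/2))⁻¹) := by rw [hUb]
            _ = (Sw b 1 j * Ew b (j+3) ((m-j)/2)) * (b (j+1) * Ew b (j+2) ((m+1-j)/2) *
                Ew b (j+3) ((m-j)/2) * (Ew b (j+3) ((m-j)/2))⁻¹) := by group
            _ = (Ew b (j+3) ((m-j)/2) * Sw b 1 j) * (b (j+1) * Ew b (j+2) ((m+1-j)/2) *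
                Ew b (j+3) ((m-j)/2) * (Ew b (j+3) ((m-j)/2))⁻¹) := by rw [← hUS]
            _ = Ew b (j+3) ((m-j)/2) * (Sw b 1 j * b (j+1) * Ew b (j+2) ((m+1-j)/2) *
                Ew b (j+3) ((m-j)/2)) * (Ew b (j+3) ((m-j)/2))⁻¹ := by group
  -- downward chain
  have hchain : ∀ t : ℕ, t ≤ m + 1 → (W (m+1-t))^(m+2) = Z := by
    intro t
    induction t with
    | zero =>
        intro _
        simpa [hWtop] using hF2
    | succ t ih =>
        intro ht
        have hjm : m + 1 - (t+1) ≤ m := by omega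
        have hj1 : (m+1-(t+1)) + 1 = m + 1 - t := by omega
        set j := m + 1 - (t+1) with hjdef
        calc (W j)^(m+2)
            = (Ew b (j+3) ((m-j)/2) * W (j+1) * (Ew b (j+3) ((m-j)/2))⁻¹)^(m+2) := by
              rw [← hWstep j hjm]
          _ = Ew b (j+3) ((m-j)/2) * (W (j+1))^(m+2) * (Ew b (j+3) ((m-j)/2))⁻¹ :=
              conjpow _ _ _
          _ = Ew b (j+3) ((m-j)/2) * Z * (Ew b (j+3) ((m-j)/2))⁻¹ := by
              rw [hj1, ih (by omega)]
          _ = Z := by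
              rw [← hZE (j+3) ((m-j)/2) (by omega) (by omega)]; group
  have hW0 : (Ew b 1 ((m+2)/2) * Ew b 2 ((m+1)/2))^(m+2) = Z := by
    have h0 := hchain (m+1) (le_refl _)
    rw [show m + 1 - (m+1) = 0 from by omega] at h0
    rw [hW] at h0
    simpa [Sw, show (m+2-0)/2 = (m+2)/2 from by omega,
      show (m+1-0)/2 = (m+1)/2 from by omega] using h0
  constructor
  · rw [hW0, hF2]
  · -- (B*A)^k = B * (A*B)^k * B⁻¹ = Z
    have hconj : Ew b 2 ((m+1)/2) * Ew b 1 ((m+2)/2)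
        = Ew b 2 ((m+1)/2) * (Ew b 1 ((m+2)/2) * Ew b 2 ((m+1)/2)) *
          (Ew b 2 ((m+1)/2))⁻¹ := by group
    rw [hconj, conjpow, hW0, ← hZE 2 ((m+1)/2) (by omega) (by omega), hF2]
    group
end

section
/- Let a, b, c ∈ ℂ and let S be the upper unitriangular matrix S = [[1, a, b],[0, 1, c],[0, 0, 1]]. Then the characteristic polynomial of Sᵀ·S⁻¹ equals (X − 1)³ if and only if a² + b² + c² = a·b·c. -/
open Matrix

/-- For the upper unitriangular Stokes matrix `S = [[1,a,b],[0,1,c],[0,0,1]]`, the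
characteristic polynomial of `Sᵀ·S⁻¹` equals `(X - 1)³` if and only if
`a² + b² + c² = a·b·c`. -/
theorem stmt_18 (a b c : ℂ) :
    Matrix.charpoly ((!![1, a, b; 0, 1, c; 0, 0, 1])ᵀ * (!![1, a, b; 0, 1, c; 0, 0, 1])⁻¹) =
        (Polynomial.X - 1) ^ 3 ↔
      a ^ 2 + b ^ 2 + c ^ 2 = a * b * c := by
  open Polynomial in
  have hT : (!![1, a, b; 0, 1, c; 0, 0, 1])ᵀ = !![1,0,0; a,1,0; b,c,1] := by
    ext i j; fin_cases i <;> fin_cases j <;> rfl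
  have hinv : (!![1, a, b; 0, 1, c; 0, 0, 1])⁻¹ = !![1, -a, a*c-b; 0, 1, -c; 0, 0, 1] := by
    apply inv_eq_right_inv
    rw [Matrix.mul_fin_three, Matrix.one_fin_three]
    congr 1 <;> ring
  have hM : (!![1, a, b; 0, 1, c; 0, 0, 1])ᵀ * (!![1, a, b; 0, 1, c; 0, 0, 1])⁻¹ =
      !![1, -a, a*c-b; a, 1-a^2, a^2*c-a*b-c; b, c-a*b, a*b*c-b^2-c^2+1] := by
    rw [hT, hinv, Matrix.mul_fin_three]
    congr 1 <;> ring
  rw [hM]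
  have hcp : Matrix.charpoly
      (!![1, -a, a*c-b; a, 1-a^2, a^2*c-a*b-c; b, c-a*b, a*b*c-b^2-c^2+1]) =
      X^3 - C (3 - (a^2+b^2+c^2) + a*b*c) * X^2 + C (3 - (a^2+b^2+c^2) + a*b*c) * X - 1 := by
    rw [Matrix.charpoly, Matrix.det_fin_three]
    simp [charmatrix_apply_eq, charmatrix_apply_ne, Matrix.charmatrix,
      map_ofNat]
    ring
  rw [hcp]
  have hX : (X - 1 : ℂ[X])^3 = X^3 - C 3 * X^2 + C 3 * X - 1 := by
    have : (C 3 : ℂ[X]) = 3 := map_ofNat C 3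
    rw [this]; ring
  rw [hX]
  constructor
  · intro h
    have h2 := congrArg (fun p => p.coeff 2) h
    simp only [coeff_sub, coeff_add, coeff_X_pow, coeff_C_mul, coeff_one, coeff_X] at h2
    norm_num at h2
    linear_combination h2
  · intro h
    rw [h]
    ring_nf
end

section
/- Let K be a field, N ≥ 1, and S an invertible N×N matrix over K. Set M := Sᵀ·S⁻¹ and let p(X) = Σ_{j=0}^{N} p_j X^j be the characteristic polynomial of M. Then: (1) M⁻¹ = S·Mᵀ·S⁻¹, so M is conjugate to a matrix with the same characteristic polynomial as M⁻¹; (2) det M = 1; (3) the coefficients of p satisfy p_j = (−1)^N · p_{N−j} for all 0 ≤ j ≤ N, equivalently X^N · p(1/X) = (−1)^N · p(X). -/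
open Matrix Polynomial

section aux
variable {K : Type*} [Field K] {n : Type*} [DecidableEq n] [Fintype n]

lemma my_charpoly_transpose (A : Matrix n n K) : Aᵀ.charpoly = A.charpoly := by
  rw [Matrix.charpoly, Matrix.charpoly, ← Matrix.det_transpose (charmatrix A)]
  congr 1
  ext i j
  rcases eq_or_ne i j with h | h
  · subst h; simp [charmatrix_apply_eq]
  · rw [Matrix.transpose_apply, charmatrix_apply_ne _ _ _ h,
      charmatrix_apply_ne _ _ _ (Ne.symm h), Matrix.transpose_apply]

lemma my_charpoly_conj (P A : Matrix n n K) (hP : IsUnit P) :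
    (P * A * P⁻¹).charpoly = A.charpoly := by
  have hPdet : IsUnit P.det := (Matrix.isUnit_iff_isUnit_det P).mp hP
  have h1 : P * P⁻¹ = 1 := Matrix.mul_nonsing_inv P hPdet
  have hPP : P.map (C : K →+* K[X]) * (P⁻¹).map C = 1 := by
    rw [← Matrix.map_mul, h1, Matrix.map_one _ (map_zero C) (map_one C)]
  have hch : charmatrix (P * A * P⁻¹) =
      P.map (C : K →+* K[X]) * charmatrix A * (P⁻¹).map C := by
    rw [charmatrix, charmatrix]
    simp only [RingHom.mapMatrix_apply, Matrix.scalar_apply, Matrix.map_mul,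
      Matrix.mul_sub, Matrix.sub_mul]
    congr 1
    rw [← Matrix.smul_eq_mul_diagonal, Matrix.smul_mul, hPP, Matrix.smul_eq_diagonal_mul,
      Matrix.mul_one]
  rw [Matrix.charpoly, hch, Matrix.det_mul, Matrix.det_mul, mul_right_comm,
    ← Matrix.det_mul, hPP, Matrix.det_one, one_mul]
  rfl

end aux

/-- For an invertible `N×N` matrix `S` over a field, set `M := Sᵀ·S⁻¹` with characteristic
polynomial `p`. Then `M⁻¹ = S·Mᵀ·S⁻¹`, `det M = 1`, and the coefficients of `p` satisfy
the (anti)palindromicity `p_j = (-1)^N · p_{N-j}` for `0 ≤ j ≤ N`. -/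
theorem stmt_19 {K : Type*} [Field K] (N : ℕ) (hN : 1 ≤ N)
    (S : Matrix (Fin N) (Fin N) K) (hS : IsUnit S) :
    (Sᵀ * S⁻¹)⁻¹ = S * (Sᵀ * S⁻¹)ᵀ * S⁻¹ ∧
    (Sᵀ * S⁻¹).det = 1 ∧
    ∀ j : ℕ, j ≤ N →
      (Sᵀ * S⁻¹).charpoly.coeff j = (-1 : K) ^ N * (Sᵀ * S⁻¹).charpoly.coeff (N - j) := by
  set M := Sᵀ * S⁻¹ with hM
  have hSdet : IsUnit S.det := (Matrix.isUnit_iff_isUnit_det S).mp hS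
  have hSS : S * S⁻¹ = 1 := Matrix.mul_nonsing_inv S hSdet
  have hSS' : S⁻¹ * S = 1 := Matrix.nonsing_inv_mul S hSdet
  have hdetM : M.det = 1 := by
    rw [hM, Matrix.det_mul, Matrix.det_transpose, ← Matrix.det_mul, hSS, Matrix.det_one]
  have hMunit : IsUnit M.det := by rw [hdetM]; exact isUnit_one
  have hMM : M⁻¹ * M = 1 := Matrix.nonsing_inv_mul M hMunit
  have h1 : M⁻¹ = S * Mᵀ * S⁻¹ := by
    rw [hM, Matrix.mul_inv_rev, Matrix.nonsing_inv_nonsing_inv S hSdet,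
      Matrix.transpose_mul, Matrix.transpose_transpose, Matrix.transpose_nonsing_inv]
    rw [Matrix.mul_assoc, Matrix.mul_assoc, hSS, Matrix.mul_one]
  refine ⟨h1, hdetM, ?_⟩
  -- charpoly M⁻¹ = charpoly M
  have hconj : (M⁻¹).charpoly = M.charpoly := by
    rw [h1, my_charpoly_conj S Mᵀ hS, my_charpoly_transpose]
  -- charpoly M⁻¹ = (-1)^N * charpolyRev M
  have hkey : (M⁻¹).charpoly = (-1 : K[X]) ^ N * M.charpolyRev := by
    have hmap : (M⁻¹).map (C : K →+* K[X]) * M.map C = 1 := by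
      rw [← Matrix.map_mul, hMM, Matrix.map_one _ (map_zero C) (map_one C)]
    have hdetmap : (M.map (C : K →+* K[X])).det = 1 := by
      rw [show M.map (C : K →+* K[X]) = (C : K →+* K[X]).mapMatrix M from rfl,
        ← RingHom.map_det, hdetM, _root_.map_one]
    have hprod : charmatrix (M⁻¹) * M.map (C : K →+* K[X]) =
        -(1 - (X : K[X]) • M.map C) := by
      rw [charmatrix]
      simp only [RingHom.mapMatrix_apply, Matrix.scalar_apply, Matrix.sub_mul]
      rw [← Matrix.smul_eq_diagonal_mul, hmap, neg_sub]
    have := congrArg Matrix.det hprod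
    rw [Matrix.det_mul, hdetmap, mul_one, Matrix.det_neg, Fintype.card_fin] at this
    rw [Matrix.charpoly, this, Matrix.charpolyRev]
  have hrev : M.charpoly = (-1 : K[X]) ^ N * M.charpoly.reverse := by
    rw [Matrix.reverse_charpoly, ← hkey, hconj]
  have hdeg : M.charpoly.natDegree = N := by
    rw [Matrix.charpoly_natDegree_eq_dim, Fintype.card_fin]
  intro j hj
  conv_lhs => rw [hrev]
  rw [show ((-1 : K[X]) ^ N) = Polynomial.C ((-1 : K) ^ N) by simp,
    Polynomial.coeff_C_mul, Polynomial.coeff_reverse, hdeg, Polynomial.revAt_le hj]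
end
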